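/- arXiv:0805.3376 — 9 statements merged into one kernel-verified Lean document; each statement's English description precedes it below -/
import Mathlib

section
/- Suppose T(y) = p(x)y'' + q(x)y' + r(x)y is a second-order differential operator with function coefficients p, q, r, and suppose there exist polynomials P₁, P₂, P₃, Q₁, Q₂, Q₃ with P₁, P₂, P₃ linearly independent and T(Pᵢ) = Qᵢ for i = 1, 2, 3. Then p, q, r are rational functions. -/
open Polynomial

private lemma upd_li {P : Fin 3 → Polynomial ℝ} (h : LinearIndependent ℝ P)
    {i j : Fin 3} (hij : i ≠ j) (u c : ℝ) (hu : u ≠ 0) :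
    LinearIndependent ℝ (Function.update P j (u • P j + c • P i)) := by
  rw [Fintype.linearIndependent_iff] at h ⊢
  intro b hb
  have key : ∑ k, (if k = j then u * b j else if k = i then b i + c * b j else b k) • P k = 0 := by
    rw [← hb]
    fin_cases i <;> fin_cases j <;>
      first
        | exact absurd rfl hij
        | (simp [Fin.sum_univ_three, Function.update_apply]; module)
  have h2 := h _ key
  have hbj : b j = 0 := by
    have := h2 j; rw [if_pos rfl] at this
    exact (mul_eq_zero.mp this).resolve_left hu
  have hbi : b i = 0 := by
    have := h2 i; rw [if_neg hij, if_pos rfl] at this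
    simpa [hbj] using this
  intro k
  rcases eq_or_ne k j with rfl | hkj
  · exact hbj
  rcases eq_or_ne k i with rfl | hki
  · exact hbi
  have := h2 k; rwa [if_neg hkj, if_neg hki] at this

private lemma exists_distinct_aux : ∀ (N : ℕ) (g : Fin 3 → Polynomial ℝ),
    (∑ k, (g k).natDegree) ≤ N →
    LinearIndependent ℝ g →
    ∃ g' : Fin 3 → Polynomial ℝ, LinearIndependent ℝ g' ∧
      (∀ i, g' i ∈ Submodule.span ℝ (Set.range g)) ∧
      (∀ i j : Fin 3, i ≠ j → (g' i).natDegree ≠ (g' j).natDegree) := by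
  intro N
  induction N using Nat.strong_induction_on with
  | _ N ih =>
    intro g hN hli
    by_cases hdist : ∀ i j : Fin 3, i ≠ j → (g i).natDegree ≠ (g j).natDegree
    · exact ⟨g, hli, fun i => Submodule.subset_span (Set.mem_range_self i), hdist⟩
    push_neg at hdist
    obtain ⟨i, j, hij, hdeg⟩ := hdist
    have hgi : g i ≠ 0 := hli.ne_zero i
    have hgj : g j ≠ 0 := hli.ne_zero j
    set v : Polynomial ℝ := (g i).leadingCoeff • g j + (-(g j).leadingCoeff) • g i with hv
    have hli' : LinearIndependent ℝ (Function.update g j v) :=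
      upd_li hli hij _ _ (leadingCoeff_ne_zero.mpr hgi)
    have hvne : v ≠ 0 := by simpa using hli'.ne_zero j
    have hvsub : v = (g i).leadingCoeff • g j - (g j).leadingCoeff • g i := by
      rw [hv, neg_smul, ← sub_eq_add_neg]
    have hlt : v.natDegree < (g j).natDegree := by
      apply natDegree_lt_natDegree hvne
      have hd1 : degree ((g i).leadingCoeff • g j) = degree (g j) := by
        rw [smul_eq_C_mul, degree_C_mul (leadingCoeff_ne_zero.mpr hgi)]
      have hd2 : degree ((g j).leadingCoeff • g i) = degree (g i) := by
        rw [smul_eq_C_mul, degree_C_mul (leadingCoeff_ne_zero.mpr hgj)]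
      have hdeg' : degree (g i) = degree (g j) := by
        rw [degree_eq_natDegree hgi, degree_eq_natDegree hgj, hdeg]
      have h1 : ((g i).leadingCoeff • g j) ≠ 0 := by
        simp [smul_eq_C_mul, hgj, leadingCoeff_ne_zero.mpr hgi, mul_eq_zero, C_eq_zero]
      have hdd : degree ((g i).leadingCoeff • g j) = degree ((g j).leadingCoeff • g i) := by
        rw [hd1, hd2, hdeg']
      have hlc : ((g i).leadingCoeff • g j).leadingCoeff
          = ((g j).leadingCoeff • g i).leadingCoeff := by
        rw [smul_eq_C_mul, smul_eq_C_mul, leadingCoeff_mul, leadingCoeff_mul,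
          leadingCoeff_C, leadingCoeff_C, mul_comm]
      have := degree_sub_lt hdd h1 hlc
      rw [← hvsub] at this
      rw [← hd1]; exact this
    set g' := Function.update g j v with hg'
    have hle : ∀ k, (g' k).natDegree ≤ (g k).natDegree := by
      intro k; rcases eq_or_ne k j with rfl | hk
      · simpa [hg', Function.update_self] using hlt.le
      · rw [hg', Function.update_of_ne hk]
    have hstrict : (g' j).natDegree < (g j).natDegree := by
      simpa [hg', Function.update_self] using hlt
    have hsum : (∑ k, (g' k).natDegree) < ∑ k, (g k).natDegree :=
      Finset.sum_lt_sum (fun k _ => hle k) ⟨j, Finset.mem_univ j, hstrict⟩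
    obtain ⟨g'', hli'', hspan'', hdist''⟩ :=
      ih (∑ k, (g' k).natDegree) (lt_of_lt_of_le hsum hN) g' le_rfl hli'
    have hspan' : ∀ k, g' k ∈ Submodule.span ℝ (Set.range g) := by
      intro k; rcases eq_or_ne k j with rfl | hk
      · rw [hg', Function.update_self, hv]
        exact Submodule.add_mem _
          (Submodule.smul_mem _ _ (Submodule.subset_span ⟨k, rfl⟩))
          (Submodule.smul_mem _ _ (Submodule.subset_span ⟨i, rfl⟩))
      · rw [hg', Function.update_of_ne hk]
        exact Submodule.subset_span ⟨k, rfl⟩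
    refine ⟨g'', hli'', fun k => ?_, hdist''⟩
    exact Submodule.span_le.mpr (Set.range_subset_iff.mpr hspan') (hspan'' k)

private lemma df_cast (n : ℕ) : ((n.descFactorial 2 : ℕ) : ℝ) = n * (n - 1) := by
  cases n with
  | zero => simp
  | succ m =>
    simp [Nat.descFactorial]
    ring

private lemma det_M_ne_zero (g : Fin 3 → Polynomial ℝ) (h0 : ∀ i, g i ≠ 0)
    (hd : ∀ i j : Fin 3, i ≠ j → (g i).natDegree ≠ (g j).natDegree) :
    (Matrix.of fun i j : Fin 3 => derivative^[(j : ℕ)] (g i)).det ≠ 0 := by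
  set V : Matrix (Fin 3) (Fin 3) ℝ :=
    Matrix.of (fun i j : Fin 3 =>
      (g i).leadingCoeff * (((g i).natDegree.descFactorial (j : ℕ) : ℕ) : ℝ)) with hV
  have hsum3 : 3 ≤ (g 0).natDegree + (g 1).natDegree + (g 2).natDegree := by
    have h01 := hd 0 1 (by decide)
    have h02 := hd 0 2 (by decide)
    have h12 := hd 1 2 (by decide)
    omega
  have hterm : ∀ σ : Equiv.Perm (Fin 3),
      (∏ i, (Matrix.of fun i j : Fin 3 => derivative^[(j : ℕ)] (g i)) (σ i) i).coeff
          ((g 0).natDegree + (g 1).natDegree + (g 2).natDegree - 3)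
        = ∏ i, V (σ i) i := by
    intro σ
    rw [Fin.prod_univ_three, Fin.prod_univ_three]
    show (derivative^[0] (g (σ 0)) * derivative^[1] (g (σ 1)) * derivative^[2] (g (σ 2))).coeff _
        = ((g (σ 0)).leadingCoeff * (((g (σ 0)).natDegree.descFactorial 0 : ℕ) : ℝ))
          * ((g (σ 1)).leadingCoeff * (((g (σ 1)).natDegree.descFactorial 1 : ℕ) : ℝ))
          * ((g (σ 2)).leadingCoeff * (((g (σ 2)).natDegree.descFactorial 2 : ℕ) : ℝ))
    have hsσ : (g (σ 0)).natDegree + (g (σ 1)).natDegree + (g (σ 2)).natDegree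
        = (g 0).natDegree + (g 1).natDegree + (g 2).natDegree := by
      have := Equiv.sum_comp σ (fun i => (g i).natDegree)
      simpa [Fin.sum_univ_three] using this
    by_cases hσ : 1 ≤ (g (σ 1)).natDegree ∧ 2 ≤ (g (σ 2)).natDegree
    · obtain ⟨h1', h2'⟩ := hσ
      have hKe : (g 0).natDegree + (g 1).natDegree + (g 2).natDegree - 3
          = ((g (σ 0)).natDegree + ((g (σ 1)).natDegree - 1)) + ((g (σ 2)).natDegree - 2) := by
        omega
      rw [hKe]
      rw [coeff_mul_add_eq_of_natDegree_le
          (natDegree_mul_le.trans (add_le_add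
            ((natDegree_iterate_derivative _ 0).trans (by omega))
            ((natDegree_iterate_derivative _ 1).trans le_rfl)))
          ((natDegree_iterate_derivative _ 2).trans le_rfl)]
      rw [coeff_mul_add_eq_of_natDegree_le
          ((natDegree_iterate_derivative _ 0).trans (by omega))
          ((natDegree_iterate_derivative _ 1).trans le_rfl)]
      rw [coeff_iterate_derivative, coeff_iterate_derivative, coeff_iterate_derivative]
      rw [show (g (σ 0)).natDegree + 0 = (g (σ 0)).natDegree by omega,
        show (g (σ 1)).natDegree - 1 + 1 = (g (σ 1)).natDegree by omega,
        show (g (σ 2)).natDegree - 2 + 2 = (g (σ 2)).natDegree by omega]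
      rw [coeff_natDegree, coeff_natDegree, coeff_natDegree]
      simp only [nsmul_eq_mul]
      ring
    · rw [not_and_or] at hσ
      rcases hσ with h1 | h2
      · have hz : derivative^[1] (g (σ 1)) = 0 := iterate_derivative_eq_zero (by omega)
        rw [hz, Nat.descFactorial_eq_zero_iff_lt.mpr (by omega : (g (σ 1)).natDegree < 1)]
        simp
      · have hz : derivative^[2] (g (σ 2)) = 0 := iterate_derivative_eq_zero (by omega)
        rw [hz, Nat.descFactorial_eq_zero_iff_lt.mpr (by omega : (g (σ 2)).natDegree < 2)]
        simp
  have hcoeff :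
      ((Matrix.of fun i j : Fin 3 => derivative^[(j : ℕ)] (g i)).det).coeff
        ((g 0).natDegree + (g 1).natDegree + (g 2).natDegree - 3) = V.det := by
    rw [Matrix.det_apply', Matrix.det_apply', finset_sum_coeff]
    refine Finset.sum_congr rfl fun σ _ => ?_
    rw [show ((Equiv.Perm.sign σ : ℤ) : ℝ[X]) = C ((Equiv.Perm.sign σ : ℤ) : ℝ) by
      rw [map_intCast]]
    rw [coeff_C_mul, hterm σ]
  have hVdet : V.det ≠ 0 := by
    have e01 : ((g 0).natDegree : ℝ) ≠ ((g 1).natDegree : ℝ) :=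
      fun h => hd 0 1 (by decide) (Nat.cast_injective h)
    have e02 : ((g 0).natDegree : ℝ) ≠ ((g 2).natDegree : ℝ) :=
      fun h => hd 0 2 (by decide) (Nat.cast_injective h)
    have e12 : ((g 1).natDegree : ℝ) ≠ ((g 2).natDegree : ℝ) :=
      fun h => hd 1 2 (by decide) (Nat.cast_injective h)
    have hdet : V.det
        = ((g 0).leadingCoeff * ((g 1).leadingCoeff * (g 2).leadingCoeff)) *
        ((((g 1).natDegree : ℝ) - ((g 0).natDegree : ℝ)) *
         ((((g 2).natDegree : ℝ) - ((g 0).natDegree : ℝ)) *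
          (((g 2).natDegree : ℝ) - ((g 1).natDegree : ℝ)))) := by
      rw [Matrix.det_fin_three]
      simp only [hV, Matrix.of_apply, Fin.val_zero, Fin.val_one, Fin.val_two,
        Nat.descFactorial_zero, Nat.descFactorial_one, df_cast, Nat.cast_one]
      ring
    rw [hdet]
    exact mul_ne_zero
      (mul_ne_zero (leadingCoeff_ne_zero.mpr (h0 0))
        (mul_ne_zero (leadingCoeff_ne_zero.mpr (h0 1)) (leadingCoeff_ne_zero.mpr (h0 2))))
      (mul_ne_zero (sub_ne_zero_of_ne e01.symm)
        (mul_ne_zero (sub_ne_zero_of_ne e02.symm) (sub_ne_zero_of_ne e12.symm)))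
  intro h
  rw [h, coeff_zero] at hcoeff
  exact hVdet hcoeff.symm

/-- if a second-order operator `T(y) = p y'' + q y' + r y` maps three linearly
independent polynomials to polynomials, then `p, q, r` are rational functions (i.e. agree
with quotients of polynomials wherever the common polynomial denominator does not vanish). -/
theorem stmt6 (p q r : ℝ → ℝ) (P Q : Fin 3 → Polynomial ℝ)
    (hli : LinearIndependent ℝ P)
    (hT : ∀ i : Fin 3, ∀ x : ℝ,
      p x * (derivative (derivative (P i))).eval x
        + q x * (derivative (P i)).eval x + r x * (P i).eval x = (Q i).eval x) :
    ∃ d np nq nr : Polynomial ℝ, d ≠ 0 ∧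
      ∀ x : ℝ, d.eval x ≠ 0 →
        p x = np.eval x / d.eval x ∧
        q x = nq.eval x / d.eval x ∧
        r x = nr.eval x / d.eval x := by
  obtain ⟨g, hgli, hgspan, hgdeg⟩ := exists_distinct_aux (∑ k, (P k).natDegree) P le_rfl hli
  have hg0 : ∀ i, g i ≠ 0 := fun i => hgli.ne_zero i
  choose c hc using fun i => (Submodule.mem_span_range_iff_exists_fun ℝ).mp (hgspan i)
  set M : Matrix (Fin 3) (Fin 3) (Polynomial ℝ) :=
    Matrix.of (fun i j : Fin 3 => derivative^[(j : ℕ)] (P i)) with hM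
  have hMg : (Matrix.of fun i j : Fin 3 => derivative^[(j : ℕ)] (g i))
      = (Matrix.of c).map Polynomial.C * M := by
    refine Matrix.ext fun i j => ?_
    show derivative^[(j : ℕ)] (g i) = ∑ k, C (c i k) * derivative^[(j : ℕ)] (P k)
    rw [← hc i]
    rw [iterate_derivative_sum]
    refine Finset.sum_congr rfl fun k _ => ?_
    rw [smul_eq_C_mul, iterate_derivative_C_mul]
  have hdM : M.det ≠ 0 := by
    have h := det_M_ne_zero g hg0 hgdeg
    rw [hMg, Matrix.det_mul] at h
    exact right_ne_zero_of_mul h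
  refine ⟨M.det, (M.adjugate.mulVec (fun i => Q i)) 2, (M.adjugate.mulVec (fun i => Q i)) 1,
    (M.adjugate.mulVec (fun i => Q i)) 0, hdM, ?_⟩
  intro x hx
  have hdetA : (M.map (eval x)).det = eval x M.det :=
    ((evalRingHom x).map_det M).symm
  have hAv : (M.map (eval x)).mulVec ![r x, q x, p x] = fun i => (Q i).eval x := by
    funext i
    have h0 : derivative^[((0 : Fin 3) : ℕ)] (P i) = P i := rfl
    have h1 : derivative^[((1 : Fin 3) : ℕ)] (P i) = derivative (P i) := rfl
    have h2 : derivative^[((2 : Fin 3) : ℕ)] (P i) = derivative (derivative (P i)) := rfl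
    simp only [Matrix.mulVec, dotProduct, Fin.sum_univ_three, Matrix.map_apply,
      Matrix.of_apply, hM, Matrix.cons_val_zero, Matrix.cons_val_one, Matrix.head_cons,
      Matrix.cons_val_two, Matrix.tail_cons, h0, h1, h2]
    linear_combination hT i x
  have hkey : (M.map (eval x)).det • ![r x, q x, p x]
      = (M.map (eval x)).adjugate.mulVec (fun i => (Q i).eval x) := by
    rw [← hAv, Matrix.mulVec_mulVec, Matrix.adjugate_mul, Matrix.smul_mulVec,
      Matrix.one_mulVec]
  have hadj : (M.map (eval x)).adjugate = M.adjugate.map (eval x) :=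
    ((evalRingHom x).map_adjugate M).symm
  have hNev : ∀ j, ((M.map (eval x)).adjugate.mulVec (fun i => (Q i).eval x)) j
      = eval x ((M.adjugate.mulVec (fun i => Q i)) j) := by
    intro j
    rw [hadj]
    simp [Matrix.mulVec, dotProduct, Fin.sum_univ_three]
  have hc2 := congrFun hkey 2
  have hc1 := congrFun hkey 1
  have hc0 := congrFun hkey 0
  rw [hNev 2, hdetA] at hc2
  rw [hNev 1, hdetA] at hc1
  rw [hNev 0, hdetA] at hc0
  simp only [Pi.smul_apply, smul_eq_mul, Matrix.cons_val_zero, Matrix.cons_val_one,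
    Matrix.head_cons, Matrix.cons_val_two, Matrix.tail_cons] at hc0 hc1 hc2
  refine ⟨?_, ?_, ?_⟩
  · rw [eq_div_iff hx, mul_comm]; exact hc2
  · rw [eq_div_iff hx, mul_comm]; exact hc1
  · rw [eq_div_iff hx, mul_comm]; exact hc0
end

section
/- If P₁, P₂, P₃ are linearly independent polynomials, then the determinant of the 3×3 matrix with rows (Pᵢ'', Pᵢ', Pᵢ) is a nonzero polynomial. -/
/-!
Replacing `P j` by `P j - c • P i` (`i ≠ j`) is a row operation on the matrix, so it leaves the
determinant unchanged, and it preserves linear independence. Cancelling leading terms this way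
strictly lowers the total degree, so we may assume the `P i` have pairwise distinct degrees `dᵢ`.
Then every term of the determinant has degree at most `d₀ + d₁ + d₂ - 3`, and the coefficient
in that degree is `(d₀ - d₁)(d₁ - d₂)(d₀ - d₂)` times the product of the leading coefficients,
which is nonzero in characteristic zero.
-/

open Polynomial

theorem LinearIndependent.update_sub_smul {R M ι : Type*} [CommRing R] [AddCommGroup M]
    [Module R M] [DecidableEq ι] {v : ι → M} (hv : LinearIndependent R v) {i j : ι} (hij : i ≠ j)
    (c : R) : LinearIndependent R (Function.update v j (v j - c • v i)) := by
  refine hv.update j _ ⟨1, one_mem _, Finsupp.single j 1 - Finsupp.single i c, ?_, ?_⟩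
  · simp [hij]
  · simp [Finsupp.linearCombination_single]

namespace Polynomial

section CommSemiring

variable {R : Type*} [CommSemiring R]

theorem coeff_iterate_derivative_natDegree_sub (p : R[X]) (k : ℕ) :
    (derivative^[k] p).coeff (p.natDegree - k) = p.natDegree.descFactorial k • p.leadingCoeff := by
  rcases lt_or_ge p.natDegree k with hk | hk
  · simp [iterate_derivative_eq_zero hk, Nat.descFactorial_eq_zero_iff_lt.mpr hk]
  · rw [coeff_iterate_derivative, Nat.sub_add_cancel hk, coeff_natDegree]

theorem coeff_iterate_derivative_mul₃ (p q r : R[X]) {a b c N : ℕ}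
    (hN : N + (a + b + c) = p.natDegree + q.natDegree + r.natDegree) :
    (derivative^[a] p * derivative^[b] q * derivative^[c] r).coeff N =
      (p.natDegree.descFactorial a * q.natDegree.descFactorial b *
        r.natDegree.descFactorial c : ℕ) • (p.leadingCoeff * q.leadingCoeff * r.leadingCoeff) := by
  by_cases h : a ≤ p.natDegree ∧ b ≤ q.natDegree ∧ c ≤ r.natDegree
  · obtain ⟨ha, hb, hc⟩ := h
    obtain rfl : N = (p.natDegree - a) + (q.natDegree - b) + (r.natDegree - c) := by omega
    rw [coeff_mul_add_eq_of_natDegree_le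
        (natDegree_mul_le.trans (add_le_add (natDegree_iterate_derivative p a)
          (natDegree_iterate_derivative q b))) (natDegree_iterate_derivative r c),
      coeff_mul_add_eq_of_natDegree_le (natDegree_iterate_derivative p a)
        (natDegree_iterate_derivative q b),
      coeff_iterate_derivative_natDegree_sub, coeff_iterate_derivative_natDegree_sub,
      coeff_iterate_derivative_natDegree_sub]
    simp only [nsmul_eq_mul, Nat.cast_mul]
    ring
  · simp only [not_and_or, not_le] at h
    rcases h with h | h | h <;>
      simp [iterate_derivative_eq_zero h, Nat.descFactorial_eq_zero_iff_lt.mpr h]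

end CommSemiring

section Wronskian

variable {R : Type*} [CommRing R]

noncomputable def wronskianMatrix (P : Fin 3 → R[X]) : Matrix (Fin 3) (Fin 3) R[X] :=
  Matrix.of fun i => ![derivative (derivative (P i)), derivative (P i), P i]

theorem wronskianMatrix_apply (P : Fin 3 → R[X]) (i l : Fin 3) :
    wronskianMatrix P i l = derivative^[2 - l] (P i) := by
  fin_cases l <;> rfl

theorem wronskianMatrix_update_sub_smul (P : Fin 3 → R[X]) {i j : Fin 3}
    (c : R) : wronskianMatrix (Function.update P j (P j - c • P i)) =
      (wronskianMatrix P).updateRow j (wronskianMatrix P j + (-C c) • wronskianMatrix P i) := by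
  ext k l : 1
  rcases eq_or_ne k j with rfl | hk
  · simp [wronskianMatrix_apply, smul_eq_C_mul, sub_eq_add_neg]
  · simp [wronskianMatrix_apply, hk]

theorem det_wronskianMatrix_update_sub_smul (P : Fin 3 → R[X]) {i j : Fin 3} (hij : i ≠ j)
    (c : R) : (wronskianMatrix (Function.update P j (P j - c • P i))).det =
      (wronskianMatrix P).det := by
  rw [wronskianMatrix_update_sub_smul, Matrix.det_updateRow_add_smul_self _ hij.symm]

theorem coeff_det_wronskianMatrix (P : Fin 3 → R[X]) {N : ℕ}
    (hN : N + 3 = (P 0).natDegree + (P 1).natDegree + (P 2).natDegree) :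
    (wronskianMatrix P).det.coeff N =
      ((P 0).natDegree - (P 1).natDegree : R) * ((P 1).natDegree - (P 2).natDegree) *
        ((P 0).natDegree - (P 2).natDegree) *
        ((P 0).leadingCoeff * (P 1).leadingCoeff * (P 2).leadingCoeff) := by
  have hN' {a b c : ℕ} (h : a + b + c = 3) :
      N + (a + b + c) = (P 0).natDegree + (P 1).natDegree + (P 2).natDegree := by rw [h, hN]
  simp only [Matrix.det_fin_three, wronskianMatrix_apply, Fin.isValue, Fin.val_zero, Fin.val_one,
    Fin.val_two, Nat.reduceSub, coeff_add, coeff_sub]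
  simp only [coeff_iterate_derivative_mul₃ _ _ _ (hN' _), nsmul_eq_mul, Nat.cast_mul,
    Nat.cast_descFactorial_two, Nat.descFactorial_one, Nat.descFactorial_zero, Nat.cast_one]
  ring

theorem det_wronskianMatrix_ne_zero [IsDomain R] [CharZero R] {P : Fin 3 → R[X]}
    (hP : ∀ i, P i ≠ 0) (hd : Function.Injective fun i => (P i).natDegree) :
    (wronskianMatrix P).det ≠ 0 := by
  have h01 : (P 0).natDegree ≠ (P 1).natDegree := hd.ne (by decide)
  have h02 : (P 0).natDegree ≠ (P 2).natDegree := hd.ne (by decide)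
  have h12 : (P 1).natDegree ≠ (P 2).natDegree := hd.ne (by decide)
  have hN : ((P 0).natDegree + (P 1).natDegree + (P 2).natDegree - 3) + 3 =
      (P 0).natDegree + (P 1).natDegree + (P 2).natDegree := by omega
  intro hdet
  have hcoeff := coeff_det_wronskianMatrix P hN
  rw [hdet, coeff_zero] at hcoeff
  refine mul_ne_zero (mul_ne_zero (mul_ne_zero ?_ ?_) ?_)
    (mul_ne_zero (mul_ne_zero ?_ ?_) ?_) hcoeff.symm
  all_goals first
    | exact sub_ne_zero.mpr (Nat.cast_injective.ne ‹_›)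
    | exact leadingCoeff_ne_zero.mpr (hP _)

end Wronskian

section Elimination

variable {K : Type*} [Field K] {ι : Type*} [DecidableEq ι]

theorem degree_sub_smul_lt {p q : K[X]} (hp : p ≠ 0) (hq : q ≠ 0)
    (h : p.natDegree = q.natDegree) :
    (q - (q.leadingCoeff / p.leadingCoeff) • p).degree < q.degree := by
  have hc : q.leadingCoeff / p.leadingCoeff ≠ 0 := by simp [hp, hq]
  rw [smul_eq_C_mul]
  refine degree_sub_lt_left ?_ hq ?_
  · rw [degree_C_mul hc, degree_eq_natDegree hp, degree_eq_natDegree hq, h]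
  · rw [leadingCoeff_mul, leadingCoeff_C, div_mul_cancel₀ _ (leadingCoeff_ne_zero.mpr hp)]

theorem linearIndependent_induction [Fintype ι] {motive : (ι → K[X]) → Prop}
    (of_injective : ∀ P : ι → K[X], (∀ i, P i ≠ 0) →
      Function.Injective (fun i => (P i).natDegree) → motive P)
    (of_update : ∀ (P : ι → K[X]) (i j : ι) (c : K), i ≠ j →
      motive (Function.update P j (P j - c • P i)) → motive P)
    {P : ι → K[X]} (hP : LinearIndependent K P) : motive P := by
  induction hn : ∑ k, (P k).natDegree using Nat.strong_induction_on generalizing P with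
  | _ n ih =>
  by_cases hinj : Function.Injective (fun i => (P i).natDegree)
  · exact of_injective P hP.ne_zero hinj
  obtain ⟨i, j, hdeg, hij⟩ : ∃ i j, (P i).natDegree = (P j).natDegree ∧ i ≠ j := by
    simpa [Function.Injective] using hinj
  set c := (P j).leadingCoeff / (P i).leadingCoeff
  have hQ := hP.update_sub_smul hij c
  have hlt : (P j - c • P i).natDegree < (P j).natDegree :=
    natDegree_lt_natDegree (by simpa using hQ.ne_zero j)
      (degree_sub_smul_lt (hP.ne_zero i) (hP.ne_zero j) hdeg)
  refine of_update P i j c hij (ih _ ?_ hQ rfl)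
  rw [← hn]
  refine Finset.sum_lt_sum (fun k _ => ?_) ⟨j, Finset.mem_univ j, by simpa using hlt⟩
  rcases eq_or_ne k j with rfl | hk
  · simpa using hlt.le
  · simp [hk]

theorem det_wronskianMatrix_ne_zero_of_linearIndependent [CharZero K] {P : Fin 3 → K[X]}
    (hP : LinearIndependent K P) : (wronskianMatrix P).det ≠ 0 := by
  refine linearIndependent_induction (motive := fun P => (wronskianMatrix P).det ≠ 0)
    (fun P hP hd => det_wronskianMatrix_ne_zero hP hd) (fun P i j c hij h => ?_) hP
  rwa [det_wronskianMatrix_update_sub_smul P hij] at h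

end Elimination

end Polynomial

/-- if `P₁, P₂, P₃` are linearly independent polynomials, then the Wronskian-type
determinant of the matrix with rows `(Pᵢ'', Pᵢ', Pᵢ)` is a nonzero polynomial. -/
theorem stmt7 (P : Fin 3 → Polynomial ℝ) (hli : LinearIndependent ℝ P) :
    Matrix.det (Matrix.of fun i : Fin 3 =>
      ![derivative (derivative (P i)), derivative (P i), P i]) ≠ 0 :=
  det_wronskianMatrix_ne_zero_of_linearIndependent hli
end

section
/- Each of the nine operators x⁴D² - 2(n-1)x³D + n(n-1)x², x³D² - 2(n-1)x²D + n(n-1)x, x²D², xD², D², x²D - nx, xD, D, 1 maps the space P_n of polynomials of degree at most n into itself. -/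
open Polynomial

private lemma coeff_zero_of_deg {n : ℕ} {p : Polynomial ℝ} (hp : p.degree ≤ (n : WithBot ℕ))
    {k : ℕ} (hk : n < k) : p.coeff k = 0 :=
  coeff_eq_zero_of_degree_lt (lt_of_le_of_lt hp (by exact_mod_cast hk))

/-- x·D preserves degree ≤ n. -/
private lemma lemXD (n : ℕ) (q : Polynomial ℝ) (hq : q.degree ≤ (n : WithBot ℕ)) :
    (X * derivative q).degree ≤ (n : WithBot ℕ) := by
  rw [degree_le_iff_coeff_zero]
  intro m hm
  have hm' : n < m := by exact_mod_cast hm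
  obtain ⟨k, rfl⟩ : ∃ k, m = k + 1 := ⟨m - 1, by omega⟩
  rw [coeff_X_mul, coeff_derivative, coeff_zero_of_deg hq (by omega), zero_mul]

/-- x²·D² preserves degree ≤ n. -/
private lemma lemX2D2 (n : ℕ) (q : Polynomial ℝ) (hq : q.degree ≤ (n : WithBot ℕ)) :
    (X ^ 2 * derivative (derivative q)).degree ≤ (n : WithBot ℕ) := by
  rw [degree_le_iff_coeff_zero]
  intro m hm
  have hm' : n < m := by exact_mod_cast hm
  rcases Nat.lt_or_ge m 2 with h2 | h2
  · rw [mul_comm, coeff_mul_X_pow']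
    simp [Nat.not_le.mpr h2]
  · obtain ⟨k, rfl⟩ : ∃ k, m = k + 2 := ⟨m - 2, by omega⟩
    rw [coeff_X_pow_mul, coeff_derivative, coeff_derivative,
      coeff_zero_of_deg hq (by omega), zero_mul, zero_mul]

/-- The key cancellation lemma: J₊ = x²D - nx preserves degree ≤ n. -/
private lemma lemJp (n : ℕ) (q : Polynomial ℝ) (hq : q.degree ≤ (n : WithBot ℕ)) :
    (X ^ 2 * derivative q - C (n : ℝ) * X * q).degree ≤ (n : WithBot ℕ) := by
  rw [degree_le_iff_coeff_zero]
  intro m hm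
  have hm' : n < m := by exact_mod_cast hm
  obtain ⟨k, rfl⟩ : ∃ k, m = k + 1 := ⟨m - 1, by omega⟩
  rw [coeff_sub, mul_assoc, coeff_C_mul, coeff_X_mul]
  rcases Nat.lt_or_ge (k + 1) 2 with h2 | h2
  · -- k = 0, so n = 0
    have hk : k = 0 := by omega
    have hn : n = 0 := by omega
    subst hk hn
    rw [mul_comm, coeff_mul_X_pow']
    simp
  · obtain ⟨j, rfl⟩ : ∃ j, k = j + 1 := ⟨k - 1, by omega⟩
    rw [show j + 1 + 1 = j + 2 from rfl, coeff_X_pow_mul, coeff_derivative]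
    rcases Nat.lt_or_ge n (j + 1) with h | h
    · rw [coeff_zero_of_deg hq h]; ring
    · have hn : n = j + 1 := by omega
      subst hn
      push_cast
      ring

/-- (x·D - n) preserves degree ≤ n. -/
private lemma lemXDn (n : ℕ) (q : Polynomial ℝ) (hq : q.degree ≤ (n : WithBot ℕ)) :
    (X * derivative q - C (n : ℝ) * q).degree ≤ (n : WithBot ℕ) := by
  refine le_trans (degree_sub_le _ _) (max_le (lemXD n q hq) ?_)
  refine le_trans (degree_mul_le _ _) ?_
  calc (C (n : ℝ)).degree + q.degree ≤ 0 + (n : WithBot ℕ) :=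
        add_le_add degree_C_le hq
    _ = (n : WithBot ℕ) := zero_add _

/-- each of the nine Lie-algebraic operators maps `P_n` into itself. -/
theorem stmt8 (n : ℕ) (p : Polynomial ℝ) (hp : p.degree ≤ (n : WithBot ℕ)) :
    (X ^ 4 * derivative (derivative p) - C (2 * ((n : ℝ) - 1)) * X ^ 3 * derivative p
        + C ((n : ℝ) * ((n : ℝ) - 1)) * X ^ 2 * p).degree ≤ (n : WithBot ℕ) ∧
    (X ^ 3 * derivative (derivative p) - C (2 * ((n : ℝ) - 1)) * X ^ 2 * derivative p
        + C ((n : ℝ) * ((n : ℝ) - 1)) * X * p).degree ≤ (n : WithBot ℕ) ∧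
    (X ^ 2 * derivative (derivative p)).degree ≤ (n : WithBot ℕ) ∧
    (X * derivative (derivative p)).degree ≤ (n : WithBot ℕ) ∧
    (derivative (derivative p)).degree ≤ (n : WithBot ℕ) ∧
    (X ^ 2 * derivative p - C (n : ℝ) * X * p).degree ≤ (n : WithBot ℕ) ∧
    (X * derivative p).degree ≤ (n : WithBot ℕ) ∧
    (derivative p).degree ≤ (n : WithBot ℕ) ∧
    p.degree ≤ (n : WithBot ℕ) := by
  set q : Polynomial ℝ := X ^ 2 * derivative p - C (n : ℝ) * X * p with hqdef
  have h6 : q.degree ≤ (n : WithBot ℕ) := lemJp n p hp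
  have h8 : (derivative p).degree ≤ (n : WithBot ℕ) := (degree_derivative_le).trans hp
  have h5 : (derivative (derivative p)).degree ≤ (n : WithBot ℕ) :=
    (degree_derivative_le).trans h8
  refine ⟨?_, ?_, lemX2D2 n p hp, lemXD n (derivative p) h8, h5, h6, lemXD n p hp, h8, hp⟩
  · -- operator 1 = J₊ ∘ J₊
    have hid : X ^ 4 * derivative (derivative p) - C (2 * ((n : ℝ) - 1)) * X ^ 3 * derivative p
        + C ((n : ℝ) * ((n : ℝ) - 1)) * X ^ 2 * p
        = X ^ 2 * derivative q - C (n : ℝ) * X * q := by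
      rw [hqdef]
      simp only [derivative_sub, derivative_mul, derivative_C, derivative_X, derivative_X_pow,
        C_mul, C_sub, C_add, C_1, map_ofNat, Nat.cast_ofNat]
      push_cast
      ring
    rw [hid]
    exact lemJp n q h6
  · -- operator 2 = (xD - n) ∘ J₊
    have hid : X ^ 3 * derivative (derivative p) - C (2 * ((n : ℝ) - 1)) * X ^ 2 * derivative p
        + C ((n : ℝ) * ((n : ℝ) - 1)) * X * p
        = X * derivative q - C (n : ℝ) * q := by
      rw [hqdef]
      simp only [derivative_sub, derivative_mul, derivative_C, derivative_X, derivative_X_pow,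
        C_mul, C_sub, C_add, C_1, map_ofNat, Nat.cast_ofNat]
      push_cast
      ring
    rw [hid]
    exact lemXDn n q h6
end

section
/- The operator J₅ = D² + 2(a - 1/(x-b))D - 2a/(x-b) maps the subspace E_n^{a,b} = span{a(x-b)-1, (x-b)², ..., (x-b)ⁿ} into itself, but does not map P_n into itself (for n ≥ 2). -/
open Polynomial

/-- `J₅ = D² + 2(a - 1/(x-b))D - 2a/(x-b)` maps
`E_n^{a,b} = span{a(x-b)-1, (x-b)², ..., (x-b)ⁿ}` into itself, but does not map `P_n`
into itself (for `n ≥ 2`). -/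
theorem stmt10 (a b : ℝ) (n : ℕ) (hn : 2 ≤ n) :
    let φ := algebraMap (Polynomial ℝ) (RatFunc ℝ)
    let J5 : Polynomial ℝ → RatFunc ℝ := fun y =>
      φ (derivative (derivative y))
        + (φ (C (2 * a)) - 2 / φ (X - C b)) * φ (derivative y)
        - (φ (C (2 * a)) / φ (X - C b)) * φ y
    let E : Submodule ℝ (Polynomial ℝ) :=
      Submodule.span ℝ ({C a * (X - C b) - 1} ∪ {q | ∃ j : ℕ, 2 ≤ j ∧ j ≤ n ∧ q = (X - C b) ^ j})
    (∀ y ∈ E, ∃ z ∈ E, J5 y = φ z) ∧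
    ¬ (∀ y : Polynomial ℝ, y.degree ≤ (n : WithBot ℕ) →
        ∃ z : Polynomial ℝ, z.degree ≤ (n : WithBot ℕ) ∧ J5 y = φ z) := by
  intro φ J5 E
  have hu : φ (X - C b) ≠ 0 := RatFunc.algebraMap_ne_zero (X_sub_C_ne_zero b)
  have hu' : φ X - φ (C b) ≠ 0 := by rwa [map_sub] at hu
  have hinj : Function.Injective φ := RatFunc.algebraMap_injective ℝ
  constructor
  · intro y hy
    induction hy using Submodule.span_induction with
    | mem x hx =>
      rcases hx with hx | ⟨j, hj2, hjn, rfl⟩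
      · simp only [Set.mem_singleton_iff] at hx
        subst hx
        refine ⟨0, Submodule.zero_mem _, ?_⟩
        show φ (derivative (derivative _)) + _ - _ = φ 0
        rw [show derivative (C a * (X - C b) - 1) = C a by
          simp [derivative_sub, derivative_mul]]
        rw [show derivative (C a : ℝ[X]) = 0 from derivative_C]
        simp only [map_mul, map_add, map_sub, map_one, map_ofNat, map_zero]
        field_simp
        ring
      · obtain ⟨k, rfl⟩ : ∃ k, j = k + 2 := ⟨j - 2, by omega⟩
        refine ⟨C (((k:ℝ)+2)*((k:ℝ)-1)) * (X - C b) ^ k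
          + C (2*a*((k:ℝ)+1)) * (X - C b) ^ (k+1), ?_, ?_⟩
        · rcases k with _ | _ | m
          · have h1 : (((0:ℕ):ℝ)+2)*(((0:ℕ):ℝ)-1) = -2 := by norm_num
            have h2 : 2*a*(((0:ℕ):ℝ)+1) = 2*a := by push_cast; ring
            rw [h1, h2]
            have heq : (C (-2:ℝ)) * (X - C b) ^ 0 + C (2*a) * (X - C b) ^ (0+1)
                = (2:ℝ) • (C a * (X - C b) - 1) := by
              simp only [smul_eq_C_mul, C_mul, map_neg, map_ofNat]
              ring
            rw [heq]
            exact Submodule.smul_mem _ _ (Submodule.subset_span (Or.inl rfl))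
          · have h1 : (((1:ℕ):ℝ)+2)*(((1:ℕ):ℝ)-1) = 0 := by norm_num
            have h2 : 2*a*(((1:ℕ):ℝ)+1) = 4*a := by push_cast; ring
            rw [h1, h2, C_0, zero_mul, zero_add, ← smul_eq_C_mul]
            exact Submodule.smul_mem _ _ (Submodule.subset_span
              (Or.inr ⟨2, le_refl 2, by omega, rfl⟩))
          · refine Submodule.add_mem _ ?_ ?_
            · rw [← smul_eq_C_mul]
              refine Submodule.smul_mem _ _ (Submodule.subset_span (Or.inr ?_))
              exact ⟨m+1+1, by omega, by omega, rfl⟩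
            · rw [← smul_eq_C_mul]
              refine Submodule.smul_mem _ _ (Submodule.subset_span (Or.inr ?_))
              exact ⟨m+1+1+1, by omega, by omega, rfl⟩
        · show φ (derivative (derivative _)) + _ - _ = φ _
          rw [show derivative ((X - C b) ^ (k+2)) = C ((k:ℝ)+2) * (X - C b)^(k+1) by
            simp [derivative_pow] <;> (push_cast; ring)]
          rw [show derivative (C ((k:ℝ)+2) * (X - C b)^(k+1))
              = C (((k:ℝ)+2)*((k:ℝ)+1)) * (X - C b)^k by
            simp [derivative_pow, derivative_C_mul] <;> (push_cast; ring)]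
          simp only [map_mul, map_add, map_sub, map_one, map_ofNat, map_zero, map_pow,
            map_natCast]
          field_simp
          ring
    | zero =>
      refine ⟨0, Submodule.zero_mem _, ?_⟩
      show φ (derivative (derivative _)) + _ - _ = φ 0
      simp
    | add x y hx hy ihx ihy =>
      obtain ⟨z1, hz1, e1⟩ := ihx
      obtain ⟨z2, hz2, e2⟩ := ihy
      refine ⟨z1 + z2, Submodule.add_mem _ hz1 hz2, ?_⟩
      have e1' : φ (derivative (derivative x))
          + (φ (C (2 * a)) - 2 / φ (X - C b)) * φ (derivative x)
          - (φ (C (2 * a)) / φ (X - C b)) * φ x = φ z1 := e1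
      have e2' : φ (derivative (derivative y))
          + (φ (C (2 * a)) - 2 / φ (X - C b)) * φ (derivative y)
          - (φ (C (2 * a)) / φ (X - C b)) * φ y = φ z2 := e2
      show φ (derivative (derivative _)) + _ - _ = φ _
      simp only [derivative_add, map_add]
      linear_combination e1' + e2'
    | smul r x hx ihx =>
      obtain ⟨z, hz, e⟩ := ihx
      refine ⟨r • z, Submodule.smul_mem _ _ hz, ?_⟩
      have e' : φ (derivative (derivative x))
          + (φ (C (2 * a)) - 2 / φ (X - C b)) * φ (derivative x)
          - (φ (C (2 * a)) / φ (X - C b)) * φ x = φ z := e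
      show φ (derivative (derivative _)) + _ - _ = φ _
      simp only [smul_eq_C_mul, derivative_C_mul, map_mul] at e' ⊢
      linear_combination (φ (C r)) * e'
  · intro h
    obtain ⟨z, _, hz⟩ := h (X - C b) (by
      rw [degree_X_sub_C]
      exact_mod_cast Nat.one_le_iff_ne_zero.mpr (by omega))
    have e : φ (derivative (derivative (X - C b)))
        + (φ (C (2*a)) - 2 / φ (X - C b)) * φ (derivative (X - C b))
        - (φ (C (2*a)) / φ (X - C b)) * φ (X - C b) = φ z := hz
    rw [derivative_sub, derivative_X, derivative_C, sub_zero, derivative_one] at e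
    simp only [map_zero, map_one, mul_one] at e
    have h2 : φ (z * (X - C b)) = φ (C (-2)) := by
      rw [map_mul, ← e]
      simp only [map_mul, map_sub, map_neg, map_ofNat, map_zero]
      field_simp
      ring
    have h3 : z * (X - C b) = C (-2) := hinj h2
    have h4 := congrArg (eval b) h3
    simp at h4
end

section
/- For any real numbers a, b and n ≥ 1, each of the seven operators J₁ = (x-b)⁴D² - 2(n-1)(x-b)³D + n(n-1)(x-b)², J₂ = (x-b)³D² - (n-1)(x-b)²D, J₃ = (x-b)²D², J₄ = (x-b)D² + (a(x-b)-1)D, J₅ = D² + 2(a - 1/(x-b))D - 2a/(x-b), J₆ = (x-b)(a(x-b)-n)D - an(x-b), J₇ = 1 maps E_n^{a,b} = span{a(x-b)-1, (x-b)², ..., (x-b)ⁿ} into itself. -/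
open Polynomial

/-- each of the seven operators `J₁, ..., J₇` maps
`E_n^{a,b} = span{a(x-b)-1, (x-b)², ..., (x-b)ⁿ}` into itself. -/
theorem stmt11 (a b : ℝ) (n : ℕ) (hn : 1 ≤ n) :
    let φ := algebraMap (Polynomial ℝ) (RatFunc ℝ)
    let E : Submodule ℝ (Polynomial ℝ) :=
      Submodule.span ℝ ({C a * (X - C b) - 1} ∪ {q | ∃ j : ℕ, 2 ≤ j ∧ j ≤ n ∧ q = (X - C b) ^ j})
    let d : Polynomial ℝ → Polynomial ℝ := derivative
    (∀ y ∈ E, (X - C b) ^ 4 * d (d y) - C (2 * ((n : ℝ) - 1)) * (X - C b) ^ 3 * d y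
        + C ((n : ℝ) * ((n : ℝ) - 1)) * (X - C b) ^ 2 * y ∈ E) ∧
    (∀ y ∈ E, (X - C b) ^ 3 * d (d y) - C ((n : ℝ) - 1) * (X - C b) ^ 2 * d y ∈ E) ∧
    (∀ y ∈ E, (X - C b) ^ 2 * d (d y) ∈ E) ∧
    (∀ y ∈ E, (X - C b) * d (d y) + (C a * (X - C b) - 1) * d y ∈ E) ∧
    (∀ y ∈ E, ∃ z ∈ E,
      φ (d (d y)) + (φ (C (2 * a)) - 2 / φ (X - C b)) * φ (d y)
        - (φ (C (2 * a)) / φ (X - C b)) * φ y = φ z) ∧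
    (∀ y ∈ E, (X - C b) * (C a * (X - C b) - C (n : ℝ)) * d y
        - C (a * (n : ℝ)) * (X - C b) * y ∈ E) ∧
    (∀ y ∈ E, y ∈ E) := by
  intro φ E d
  have hφ : ∀ q, φ q = algebraMap (Polynomial ℝ) (RatFunc ℝ) q := fun _ => rfl
  have hdd : ∀ q, d q = derivative q := fun _ => rfl
  have hg0 : C a * (X - C b) - 1 ∈ E :=
    Submodule.subset_span (Set.mem_union_left _ rfl)
  have hpow : ∀ j, 2 ≤ j → j ≤ n → (X - C b) ^ j ∈ E := fun j h1 h2 =>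
    Submodule.subset_span (Set.mem_union_right _ ⟨j, h1, h2, rfl⟩)
  have hc : ∀ (c : ℝ) (m : ℕ), (c = 0 ∨ (2 ≤ m ∧ m ≤ n)) → C c * (X - C b) ^ m ∈ E := by
    rintro c m (rfl | ⟨h1, h2⟩)
    · simp only [map_zero, zero_mul]; exact E.zero_mem
    · rw [← smul_eq_C_mul]; exact E.smul_mem c (hpow m h1 h2)
  have hd1 : d (C a * (X - C b) - 1) = C a := by rw [hdd]; simp
  have hd0 : d (d (C a * (X - C b) - 1)) = 0 := by rw [hd1, hdd]; simp
  have hD2 : ∀ k : ℕ, d ((X - C b) ^ (k + 2)) = C ((k : ℝ) + 2) * (X - C b) ^ (k + 1) := by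
    intro k; rw [hdd]; simp [derivative_pow]
  have hDD : ∀ k : ℕ, d (d ((X - C b) ^ (k + 2)))
      = C (((k : ℝ) + 2) * ((k : ℝ) + 1)) * (X - C b) ^ k := by
    intro k
    rw [hD2 k, hdd, derivative_C_mul]
    simp [derivative_pow]
    ring
  have main : ∀ p q r : Polynomial ℝ,
      (p * d (d (C a * (X - C b) - 1)) + q * d (C a * (X - C b) - 1)
        + r * (C a * (X - C b) - 1) ∈ E) →
      (∀ k : ℕ, k + 2 ≤ n →
        p * d (d ((X - C b) ^ (k + 2))) + q * d ((X - C b) ^ (k + 2))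
          + r * (X - C b) ^ (k + 2) ∈ E) →
      ∀ y ∈ E, p * d (d y) + q * d y + r * y ∈ E := by
    intro p q r h0 hk y hy
    induction hy using Submodule.span_induction with
    | mem x hx =>
        rcases hx with rfl | ⟨j, hj2, hjn, rfl⟩
        · exact h0
        · obtain ⟨k, rfl⟩ : ∃ k, j = k + 2 := ⟨j - 2, by omega⟩
          exact hk k (by omega)
    | zero =>
        simp only [hdd, derivative_zero, mul_zero, add_zero]; exact E.zero_mem
    | add x y hx hy ihx ihy =>
        have h : p * d (d (x + y)) + q * d (x + y) + r * (x + y)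
            = (p * d (d x) + q * d x + r * x) + (p * d (d y) + q * d y + r * y) := by
          simp only [hdd, derivative_add]; ring
        rw [h]; exact E.add_mem ihx ihy
    | smul c x hx ihx =>
        have h : p * d (d (c • x)) + q * d (c • x) + r * (c • x)
            = c • (p * d (d x) + q * d x + r * x) := by
          simp only [hdd, smul_eq_C_mul, derivative_C_mul]; ring
        rw [h]; exact E.smul_mem c ihx
  refine ⟨?_, ?_, ?_, ?_, ?_, ?_, fun y hy => hy⟩
  · -- J₁
    intro y hy
    have key := main ((X - C b) ^ 4) (-(C (2 * ((n : ℝ) - 1)) * (X - C b) ^ 3))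
        (C ((n : ℝ) * ((n : ℝ) - 1)) * (X - C b) ^ 2) ?_ ?_ y hy
    · have h : (X - C b) ^ 4 * d (d y) - C (2 * ((n : ℝ) - 1)) * (X - C b) ^ 3 * d y
          + C ((n : ℝ) * ((n : ℝ) - 1)) * (X - C b) ^ 2 * y
          = (X - C b) ^ 4 * d (d y) + (-(C (2 * ((n : ℝ) - 1)) * (X - C b) ^ 3)) * d y
            + C ((n : ℝ) * ((n : ℝ) - 1)) * (X - C b) ^ 2 * y := by ring
      rw [h]; exact key
    · rw [hd0, hd1]
      have h : (X - C b) ^ 4 * 0 + -(C (2 * ((n : ℝ) - 1)) * (X - C b) ^ 3) * C a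
          + C ((n : ℝ) * ((n : ℝ) - 1)) * (X - C b) ^ 2 * (C a * (X - C b) - 1)
          = C (a * ((n : ℝ) - 1) * ((n : ℝ) - 2)) * (X - C b) ^ 3
            + C (-((n : ℝ) * ((n : ℝ) - 1))) * (X - C b) ^ 2 := by
        simp only [C_mul, C_sub, C_neg, C_1, map_ofNat, map_one]; ring
      rw [h]
      refine E.add_mem (hc _ 3 ?_) (hc _ 2 ?_)
      · by_cases h3 : 3 ≤ n
        · exact Or.inr ⟨by norm_num, h3⟩
        · left; interval_cases n <;> norm_num
      · by_cases h2 : 2 ≤ n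
        · exact Or.inr ⟨le_refl _, h2⟩
        · left; interval_cases n; norm_num
    · intro k hkn
      rw [hDD k, hD2 k]
      have h : (X - C b) ^ 4 * (C (((k : ℝ) + 2) * ((k : ℝ) + 1)) * (X - C b) ^ k)
          + -(C (2 * ((n : ℝ) - 1)) * (X - C b) ^ 3) * (C ((k : ℝ) + 2) * (X - C b) ^ (k + 1))
          + C ((n : ℝ) * ((n : ℝ) - 1)) * (X - C b) ^ 2 * (X - C b) ^ (k + 2)
          = C (((n : ℝ) - (k : ℝ) - 2) * ((n : ℝ) - (k : ℝ) - 3)) * (X - C b) ^ (k + 4) := by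
        simp only [C_mul, C_sub, C_neg, C_add, C_1, map_ofNat, map_one]; ring
      rw [h]
      apply hc
      by_cases h4 : k + 4 ≤ n
      · exact Or.inr ⟨by omega, h4⟩
      · left
        have h' : k + 2 = n ∨ k + 3 = n := by omega
        rcases h' with h' | h'
        · have hh : (n : ℝ) = (k : ℝ) + 2 := by exact_mod_cast h'.symm
          rw [hh]; ring
        · have hh : (n : ℝ) = (k : ℝ) + 3 := by exact_mod_cast h'.symm
          rw [hh]; ring
  · -- J₂
    intro y hy
    have key := main ((X - C b) ^ 3) (-(C ((n : ℝ) - 1) * (X - C b) ^ 2)) 0 ?_ ?_ y hy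
    · have h : (X - C b) ^ 3 * d (d y) - C ((n : ℝ) - 1) * (X - C b) ^ 2 * d y
          = (X - C b) ^ 3 * d (d y) + (-(C ((n : ℝ) - 1) * (X - C b) ^ 2)) * d y + 0 * y := by
        ring
      rw [h]; exact key
    · rw [hd0, hd1]
      have h : (X - C b) ^ 3 * 0 + -(C ((n : ℝ) - 1) * (X - C b) ^ 2) * C a
          + 0 * (C a * (X - C b) - 1)
          = C (-(a * ((n : ℝ) - 1))) * (X - C b) ^ 2 := by
        simp only [C_mul, C_sub, C_neg, C_1, map_one]; ring
      rw [h]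
      apply hc
      by_cases h2 : 2 ≤ n
      · exact Or.inr ⟨le_refl _, h2⟩
      · left; interval_cases n; norm_num
    · intro k hkn
      rw [hDD k, hD2 k]
      have h : (X - C b) ^ 3 * (C (((k : ℝ) + 2) * ((k : ℝ) + 1)) * (X - C b) ^ k)
          + -(C ((n : ℝ) - 1) * (X - C b) ^ 2) * (C ((k : ℝ) + 2) * (X - C b) ^ (k + 1))
          + 0 * (X - C b) ^ (k + 2)
          = C (((k : ℝ) + 2) * ((k : ℝ) + 2 - (n : ℝ))) * (X - C b) ^ (k + 3) := by
        simp only [C_mul, C_sub, C_neg, C_add, C_1, map_ofNat, map_one]; ring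
      rw [h]
      apply hc
      by_cases h3 : k + 3 ≤ n
      · exact Or.inr ⟨by omega, h3⟩
      · left
        have hh : (n : ℝ) = (k : ℝ) + 2 := by exact_mod_cast (by omega : k + 2 = n).symm
        rw [hh]; ring
  · -- J₃
    intro y hy
    have key := main ((X - C b) ^ 2) 0 0 ?_ ?_ y hy
    · have h : (X - C b) ^ 2 * d (d y)
          = (X - C b) ^ 2 * d (d y) + 0 * d y + 0 * y := by ring
      rw [h]; exact key
    · rw [hd0]
      have h : (X - C b) ^ 2 * 0 + 0 * d (C a * (X - C b) - 1)
          + 0 * (C a * (X - C b) - 1) = (0 : Polynomial ℝ) := by ring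
      rw [h]; exact E.zero_mem
    · intro k hkn
      rw [hDD k]
      have h : (X - C b) ^ 2 * (C (((k : ℝ) + 2) * ((k : ℝ) + 1)) * (X - C b) ^ k)
          + 0 * d ((X - C b) ^ (k + 2)) + 0 * (X - C b) ^ (k + 2)
          = C (((k : ℝ) + 2) * ((k : ℝ) + 1)) * (X - C b) ^ (k + 2) := by ring
      rw [h]
      exact hc _ (k + 2) (Or.inr ⟨by omega, hkn⟩)
  · -- J₄
    intro y hy
    have key := main (X - C b) (C a * (X - C b) - 1) 0 ?_ ?_ y hy
    · have h : (X - C b) * d (d y) + (C a * (X - C b) - 1) * d y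
          = (X - C b) * d (d y) + (C a * (X - C b) - 1) * d y + 0 * y := by ring
      rw [h]; exact key
    · rw [hd0, hd1]
      have h : (X - C b) * 0 + (C a * (X - C b) - 1) * C a + 0 * (C a * (X - C b) - 1)
          = a • (C a * (X - C b) - 1) := by
        rw [smul_eq_C_mul]; ring
      rw [h]; exact E.smul_mem a hg0
    · intro k hkn
      rw [hDD k, hD2 k]
      have h : (X - C b) * (C (((k : ℝ) + 2) * ((k : ℝ) + 1)) * (X - C b) ^ k)
          + (C a * (X - C b) - 1) * (C ((k : ℝ) + 2) * (X - C b) ^ (k + 1))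
          + 0 * (X - C b) ^ (k + 2)
          = C (((k : ℝ) + 2) * (k : ℝ)) * (X - C b) ^ (k + 1)
            + C (a * ((k : ℝ) + 2)) * (X - C b) ^ (k + 2) := by
        simp only [C_mul, C_add, C_1, map_ofNat, map_one]; ring
      rw [h]
      refine E.add_mem (hc _ (k + 1) ?_) (hc _ (k + 2) (Or.inr ⟨by omega, hkn⟩))
      rcases Nat.eq_zero_or_pos k with rfl | hk
      · left; norm_num
      · exact Or.inr ⟨by omega, by omega⟩
  · -- J₅
    intro y hy
    have h5 : ∃ z ∈ E, (X - C b) * z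
        = (X - C b) * d (d y) + (C (2 * a) * (X - C b) - 2) * d y - C (2 * a) * y := by
      induction hy using Submodule.span_induction with
      | mem x hx =>
          rcases hx with rfl | ⟨j, hj2, hjn, rfl⟩
          · refine ⟨0, E.zero_mem, ?_⟩
            rw [hd0, hd1]
            simp only [C_mul, map_ofNat, map_one]; ring
          · obtain ⟨k, rfl⟩ : ∃ k, j = k + 2 := ⟨j - 2, by omega⟩
            rcases k with _ | m
            · -- j = 2
              refine ⟨(2 : ℝ) • (C a * (X - C b) - 1), E.smul_mem _ hg0, ?_⟩
              rw [hDD 0, hD2 0, smul_eq_C_mul]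
              norm_num
              simp only [C_mul, C_sub, C_1, map_ofNat, map_one]; ring
            · -- j = m + 3
              refine ⟨C (((m : ℝ) + 3) * (m : ℝ)) * (X - C b) ^ (m + 1)
                + C (2 * a * ((m : ℝ) + 2)) * (X - C b) ^ (m + 2), ?_, ?_⟩
              · refine E.add_mem (hc _ (m + 1) ?_) (hc _ (m + 2) (Or.inr ⟨by omega, by omega⟩))
                rcases Nat.eq_zero_or_pos m with rfl | hm
                · left; norm_num
                · exact Or.inr ⟨by omega, by omega⟩
              · rw [hDD (m + 1), hD2 (m + 1)]
                push_cast
                simp only [C_mul, C_add, C_sub, C_1, map_ofNat, map_one]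
                ring
      | zero =>
          refine ⟨0, E.zero_mem, ?_⟩
          simp only [hdd, derivative_zero, mul_zero, sub_zero, add_zero]
      | add x y hx hy ihx ihy =>
          obtain ⟨z1, hz1, he1⟩ := ihx
          obtain ⟨z2, hz2, he2⟩ := ihy
          refine ⟨z1 + z2, E.add_mem hz1 hz2, ?_⟩
          simp only [hdd, derivative_add]
          simp only [hdd] at he1 he2
          linear_combination he1 + he2
      | smul c x hx ihx =>
          obtain ⟨z, hz, he⟩ := ihx
          refine ⟨c • z, E.smul_mem c hz, ?_⟩
          simp only [hdd, smul_eq_C_mul, derivative_C_mul]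
          simp only [hdd] at he
          linear_combination C c * he
    obtain ⟨z, hz, heq⟩ := h5
    refine ⟨z, hz, ?_⟩
    have ht : RatFunc.X - RatFunc.C b ≠ (0 : RatFunc ℝ) := by
      have h := X_sub_C_ne_zero (R := ℝ) b
      rw [← map_ne_zero_iff (algebraMap (Polynomial ℝ) (RatFunc ℝ))
        (RatFunc.algebraMap_injective ℝ)] at h
      simpa using h
    have hφeq := congrArg (algebraMap (Polynomial ℝ) (RatFunc ℝ)) heq
    simp only [map_mul, map_add, map_sub, map_ofNat, map_one,
      RatFunc.algebraMap_C, RatFunc.algebraMap_X] at hφeq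
    simp only [hφ, map_mul, map_sub, map_ofNat, map_one,
      RatFunc.algebraMap_C, RatFunc.algebraMap_X]
    field_simp
    linear_combination -hφeq
  · -- J₆
    intro y hy
    have key := main 0 ((X - C b) * (C a * (X - C b) - C (n : ℝ)))
        (-(C (a * (n : ℝ)) * (X - C b))) ?_ ?_ y hy
    · have h : (X - C b) * (C a * (X - C b) - C (n : ℝ)) * d y
          - C (a * (n : ℝ)) * (X - C b) * y
          = 0 * d (d y) + (X - C b) * (C a * (X - C b) - C (n : ℝ)) * d y
            + (-(C (a * (n : ℝ)) * (X - C b))) * y := by ring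
      rw [h]; exact key
    · rw [hd0, hd1]
      have h : 0 * (0 : Polynomial ℝ) + (X - C b) * (C a * (X - C b) - C (n : ℝ)) * C a
          + -(C (a * (n : ℝ)) * (X - C b)) * (C a * (X - C b) - 1)
          = C (a * a * (1 - (n : ℝ))) * (X - C b) ^ 2 := by
        simp only [C_mul, C_sub, C_1, map_one]; ring
      rw [h]
      apply hc
      by_cases h2 : 2 ≤ n
      · exact Or.inr ⟨le_refl _, h2⟩
      · left; interval_cases n; norm_num
    · intro k hkn
      rw [hDD k, hD2 k]
      have h : 0 * (C (((k : ℝ) + 2) * ((k : ℝ) + 1)) * (X - C b) ^ k)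
          + (X - C b) * (C a * (X - C b) - C (n : ℝ)) * (C ((k : ℝ) + 2) * (X - C b) ^ (k + 1))
          + -(C (a * (n : ℝ)) * (X - C b)) * (X - C b) ^ (k + 2)
          = C (a * ((k : ℝ) + 2 - (n : ℝ))) * (X - C b) ^ (k + 3)
            + C (-((n : ℝ) * ((k : ℝ) + 2))) * (X - C b) ^ (k + 2) := by
        simp only [C_mul, C_sub, C_add, C_neg, C_1, map_ofNat, map_one]; ring
      rw [h]
      refine E.add_mem (hc _ (k + 3) ?_) (hc _ (k + 2) (Or.inr ⟨by omega, hkn⟩))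
      by_cases h3 : k + 3 ≤ n
      · exact Or.inr ⟨by omega, h3⟩
      · left
        have hh : (n : ℝ) = (k : ℝ) + 2 := by exact_mod_cast (by omega : k + 2 = n).symm
        rw [hh]; ring
end

section
/- Let M ⊂ P_n be a codimension-one subspace containing the monomials xʲ for 0 ≤ j ≤ λ-1 and for n-μ+1 ≤ j ≤ n, and suppose the polynomial q_M defined by γ(q_M, v) = 0 for all v in M equals (-1)^λ C(n,λ) x^{n-λ} - ∑_{j=λ+1}^{n-μ} (-1)ʲ C(n,j) β_j x^{n-j}. Then the monomials {xʲ : 0 ≤ j ≤ λ-1}, binomials {xʲ + β_j x^λ : λ+1 ≤ j ≤ n-μ}, and monomials {xʲ : n-μ+1 ≤ j ≤ n} form a basis of M. -/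
/-! `γ(P, xᵏ) = (-1)ⁿ⁻ᵏ P_{n-k} / C(n,k)` only sees the coefficient of `xⁿ⁻ᵏ` in `P`, so the
normalization of `q_M` gives `γ(q_M, x^λ) = (-1)ⁿ` and `γ(q_M, xʲ) = -(-1)ⁿ β_j`: `q_M` annihilates
`xʲ + β_j x^λ`. As `γ(q_M, x^λ) ≠ 0` and `dim M = n`, `M` is the whole hyperplane
`{v ∈ P_n | γ(q_M, v) = 0}`, so it contains the `n` listed polynomials; these are independent
because their degrees are the distinct numbers `0, …, n` other than `λ`. -/

open Polynomial Finset

/-- The bilinear form `γ` on `P_n` with `n!·γ(xʲ/j!, xᵏ/k!) = (-1)ʲ` if `j+k = n`, else `0`. -/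
noncomputable def bochnerForm (n : ℕ) (P Q : Polynomial ℝ) : ℝ :=
  ∑ j ∈ Finset.range (n + 1),
    (-1 : ℝ) ^ j * ((j.factorial : ℝ) * ((n - j).factorial : ℝ) / (n.factorial : ℝ))
      * P.coeff j * Q.coeff (n - j)

lemma eq_inf_ker_of_le_of_finrank_le {K V : Type*} [DivisionRing K] [AddCommGroup V]
    [Module K V] {M D : Submodule K V} [FiniteDimensional K D] {φ : V →ₗ[K] K}
    (hM : M ≤ D ⊓ LinearMap.ker φ) {v : V} (hvD : v ∈ D) (hv : φ v ≠ 0)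
    (hrank : Module.finrank K D ≤ Module.finrank K M + 1) : M = D ⊓ LinearMap.ker φ := by
  have hlt : D ⊓ LinearMap.ker φ < D := inf_le_left.lt_of_ne fun h => hv (h.ge hvD).2
  have := Submodule.finiteDimensional_of_le hlt.le
  have := Submodule.finrank_lt_finrank_of_lt hlt
  exact Submodule.eq_of_le_of_finrank_le hM (by omega)

lemma X_pow_mem_degreeLT {R : Type*} [Semiring R] {k n : ℕ} (h : k < n) :
    (X ^ k : R[X]) ∈ degreeLT R n :=
  mem_degreeLT.mpr ((degree_X_pow_le k).trans_lt (by exact_mod_cast h))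

noncomputable def bochnerFormₗ (n : ℕ) (P : ℝ[X]) : ℝ[X] →ₗ[ℝ] ℝ where
  toFun := bochnerForm n P
  map_add' Q R := by
    simp only [bochnerForm, coeff_add, mul_add, Finset.sum_add_distrib]
  map_smul' c Q := by
    simp only [bochnerForm, coeff_smul, smul_eq_mul, RingHom.id_apply, Finset.mul_sum]
    exact Finset.sum_congr rfl fun j _ => by ring

@[simp]
lemma bochnerFormₗ_apply (n : ℕ) (P Q : ℝ[X]) : bochnerFormₗ n P Q = bochnerForm n P Q := rfl

lemma bochnerForm_X_pow {n k : ℕ} (hk : k ≤ n) (P : ℝ[X]) :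
    bochnerForm n P (X ^ k) = (-1) ^ (n - k) * P.coeff (n - k) / n.choose k := by
  rw [bochnerForm, Finset.sum_eq_single (n - k)]
  · rw [Nat.sub_sub_self hk, coeff_X_pow_self, Nat.cast_choose ℝ hk]
    field_simp
  · intro j hj hjk
    rw [coeff_X_pow, if_neg (by rw [Finset.mem_range] at hj; omega), mul_zero]
  · exact fun h => absurd (Finset.mem_range.mpr (by omega)) h

lemma bochnerForm_X_pow_of_coeff {n k : ℕ} (hk : k ≤ n) {P : ℝ[X]} {c : ℝ}
    (hP : P.coeff (n - k) = (-1) ^ k * n.choose k * c) :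
    bochnerForm n P (X ^ k) = (-1) ^ n * c := by
  have hchoose : (n.choose k : ℝ) ≠ 0 := Nat.cast_ne_zero.mpr (Nat.choose_pos hk).ne'
  have hsign : (-1 : ℝ) ^ (n - k) * (-1) ^ k = (-1) ^ n := by rw [← pow_add, Nat.sub_add_cancel hk]
  rw [bochnerForm_X_pow hk, hP, ← hsign]
  field_simp

/-- The polynomial `q_M` of the theorem, with `λ = l` and `μ = m`. -/
noncomputable def normalizedCovariant (n l m : ℕ) (β : ℕ → ℝ) : ℝ[X] :=
  C ((-1 : ℝ) ^ l * (n.choose l : ℝ)) * X ^ (n - l)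
    - ∑ j ∈ Finset.Icc (l + 1) (n - m), C ((-1 : ℝ) ^ j * (n.choose j : ℝ) * β j) * X ^ (n - j)

section normalizedCovariant

variable {n l m : ℕ} (β : ℕ → ℝ)

lemma normalizedCovariant_coeff_sub_left :
    (normalizedCovariant n l m β).coeff (n - l) = (-1) ^ l * n.choose l := by
  rw [normalizedCovariant, coeff_sub, coeff_C_mul, coeff_X_pow_self, finsetSum_coeff,
    Finset.sum_eq_zero, sub_zero, mul_one]
  intro j hj
  rw [Finset.mem_Icc] at hj
  rw [coeff_C_mul, coeff_X_pow, if_neg (by omega), mul_zero]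

lemma normalizedCovariant_coeff_sub_of_mem_Icc {j : ℕ} (hj : j ∈ Finset.Icc (l + 1) (n - m)) :
    (normalizedCovariant n l m β).coeff (n - j) = (-1) ^ j * n.choose j * -β j := by
  have hj' := Finset.mem_Icc.mp hj
  rw [normalizedCovariant, coeff_sub, coeff_C_mul, coeff_X_pow, if_neg (by omega), mul_zero,
    finsetSum_coeff, Finset.sum_eq_single_of_mem j hj, coeff_C_mul, coeff_X_pow_self]
  · ring
  · intro i hi hij
    rw [Finset.mem_Icc] at hi
    rw [coeff_C_mul, coeff_X_pow, if_neg (by omega), mul_zero]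

lemma bochnerForm_normalizedCovariant_X_pow_left (hl : l ≤ n) :
    bochnerForm n (normalizedCovariant n l m β) (X ^ l) = (-1) ^ n := by
  rw [← mul_one ((-1 : ℝ) ^ n)]
  exact bochnerForm_X_pow_of_coeff hl (by rw [normalizedCovariant_coeff_sub_left, mul_one])

lemma bochnerForm_normalizedCovariant_binomial {j : ℕ} (hj : j ∈ Finset.Icc (l + 1) (n - m)) :
    bochnerForm n (normalizedCovariant n l m β) (X ^ j + C (β j) * X ^ l) = 0 := by
  have hjn : l < j ∧ j ≤ n := by rw [Finset.mem_Icc] at hj; omega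
  rw [← bochnerFormₗ_apply, ← smul_eq_C_mul, map_add, map_smul, bochnerFormₗ_apply,
    bochnerFormₗ_apply, bochnerForm_normalizedCovariant_X_pow_left β (by omega),
    bochnerForm_X_pow_of_coeff hjn.2 (normalizedCovariant_coeff_sub_of_mem_Icc β hj),
    smul_eq_mul]
  ring

end normalizedCovariant

noncomputable def normalizedSequence {R : Type*} [Semiring R] [Nontrivial R] (l k : ℕ)
    (β : ℕ → R) : Polynomial.Sequence R where
  elems' j := if l < j ∧ j ≤ k then X ^ j + C (β j) * X ^ l else X ^ j
  degree_eq' j := by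
    split_ifs with h
    · refine (degree_add_eq_left_of_degree_lt ?_).trans (degree_X_pow j)
      rw [degree_X_pow]
      exact (degree_C_mul_X_pow_le l (β j)).trans_lt (by exact_mod_cast h.1)
    · exact degree_X_pow j

section normalizedSequence

variable {R : Type*} [Semiring R] [Nontrivial R] (l k : ℕ) (β : ℕ → R)

lemma normalizedSequence_apply (j : ℕ) :
    normalizedSequence l k β j = if l < j ∧ j ≤ k then X ^ j + C (β j) * X ^ l else X ^ j :=
  rfl

lemma normalizedSequence_injective : Function.Injective (normalizedSequence l k β) :=
  fun i j hij => by simpa using congrArg natDegree hij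

end normalizedSequence

lemma image_normalizedSequence {n l m : ℕ} (hlm : l + m ≤ n) (β : ℕ → ℝ) :
    (((range (n + 1)).erase l).image (normalizedSequence l (n - m) β) : Set ℝ[X]) =
      {p | ∃ j : ℕ, j < l ∧ p = X ^ j}
        ∪ {p | ∃ j : ℕ, l + 1 ≤ j ∧ j ≤ n - m ∧ p = X ^ j + C (β j) * X ^ l}
        ∪ {p | ∃ j : ℕ, n - m + 1 ≤ j ∧ j ≤ n ∧ p = X ^ j} := by
  ext p
  simp only [coe_image, coe_erase, coe_range, Set.mem_image, Set.mem_sdiff, Set.mem_Iio,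
    Set.mem_singleton_iff, normalizedSequence_apply, Set.mem_union, Set.mem_ofPred_eq]
  constructor
  · rintro ⟨j, ⟨hjn, hjl⟩, rfl⟩
    by_cases h : l < j ∧ j ≤ n - m
    · exact Or.inl (Or.inr ⟨j, h.1, h.2, if_pos h⟩)
    · rw [if_neg h]
      rcases Nat.lt_or_gt_of_ne hjl with hj | hj
      · exact Or.inl (Or.inl ⟨j, hj, rfl⟩)
      · exact Or.inr ⟨j, by omega, by omega, rfl⟩
  · rintro ((⟨j, hj, rfl⟩ | ⟨j, hj₁, hj₂, rfl⟩) | ⟨j, hj₁, hj₂, rfl⟩)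
    · exact ⟨j, ⟨by omega, by omega⟩, if_neg (by omega)⟩
    · exact ⟨j, ⟨by omega, by omega⟩, if_pos (by omega)⟩
    · exact ⟨j, ⟨by omega, by omega⟩, if_neg (by omega)⟩

/-- normalized basis of a codimension-one subspace `M ⊂ P_n` whose fundamental
covariant `q_M` has a root of multiplicity `l` at infinity and `m` at zero. -/
theorem stmt15 (n l m : ℕ) (hlm : l + m ≤ n)
    (M : Submodule ℝ (Polynomial ℝ)) (hMle : M ≤ Polynomial.degreeLE ℝ (n : WithBot ℕ))
    (hcodim : Module.finrank ℝ M = n)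
    (hmono1 : ∀ j : ℕ, j < l → (X : Polynomial ℝ) ^ j ∈ M)
    (hmono2 : ∀ j : ℕ, n - m + 1 ≤ j → j ≤ n → (X : Polynomial ℝ) ^ j ∈ M)
    (β : ℕ → ℝ) (qM : Polynomial ℝ)
    (hq : qM = C ((-1 : ℝ) ^ l * (n.choose l : ℝ)) * X ^ (n - l)
      - ∑ j ∈ Finset.Icc (l + 1) (n - m), C ((-1 : ℝ) ^ j * (n.choose j : ℝ) * β j) * X ^ (n - j))
    (hann : ∀ v ∈ M, bochnerForm n qM v = 0) :
    let S : Set (Polynomial ℝ) :=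
      {p | ∃ j : ℕ, j < l ∧ p = X ^ j}
        ∪ {p | ∃ j : ℕ, l + 1 ≤ j ∧ j ≤ n - m ∧ p = X ^ j + C (β j) * X ^ l}
        ∪ {p | ∃ j : ℕ, n - m + 1 ≤ j ∧ j ≤ n ∧ p = X ^ j}
    LinearIndependent ℝ (Subtype.val : S → Polynomial ℝ) ∧ Submodule.span ℝ S = M := by
  intro S
  change qM = normalizedCovariant n l m β at hq
  subst hq
  rw [← degreeLT_succ_eq_degreeLE] at hMle
  set g := normalizedSequence l (n - m) β
  have hS : S = ↑(((range (n + 1)).erase l).image g) := (image_normalizedSequence hlm β).symm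
  have hXl : (X ^ l : ℝ[X]) ∈ degreeLT ℝ (n + 1) := X_pow_mem_degreeLT (by omega)
  have hM : M = degreeLT ℝ (n + 1) ⊓ LinearMap.ker (bochnerFormₗ n (normalizedCovariant n l m β)) :=
    eq_inf_ker_of_le_of_finrank_le (le_inf hMle hann) hXl
      (by simp [bochnerForm_normalizedCovariant_X_pow_left β (by omega : l ≤ n)])
      (by rw [Module.finrank_eq_card_basis (degreeLT.basis ℝ (n + 1)), Fintype.card_fin, hcodim])
  have : FiniteDimensional ℝ M := Submodule.finiteDimensional_of_le hMle
  have hSM : S ⊆ M := by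
    rintro p ((⟨j, hj, rfl⟩ | ⟨j, hj₁, hj₂, rfl⟩) | ⟨j, hj₁, hj₂, rfl⟩)
    · exact hmono1 j hj
    · rw [hM]
      refine ⟨Submodule.add_mem _ (X_pow_mem_degreeLT (by omega)) ?_,
        bochnerForm_normalizedCovariant_binomial β (mem_Icc.mpr ⟨hj₁, hj₂⟩)⟩
      exact smul_eq_C_mul (β j) ▸ Submodule.smul_mem _ (β j) hXl
    · exact hmono2 j hj₁ hj₂
  have hli : LinearIndepOn ℝ id S := by
    rw [hS, coe_image]
    exact (g.linearIndependent.linearIndepOn _).id_image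
  refine ⟨hli, Submodule.eq_of_le_of_finrank_le (Submodule.span_le.mpr hSM) ?_⟩
  rw [hcodim, hS, finrank_span_finset_eq_card (hS ▸ hli),
    card_image_of_injective _ (normalizedSequence_injective _ _ _),
    card_erase_of_mem (mem_range.mpr (by omega)), card_range, Nat.add_sub_cancel]
end

section
/- Let T(y) = (x²-1)y'' + 2a((1-bx)/(b-x))((x-c)y' - y) where a = (β-α)/2, b = (β+α)/(β-α), c = b + 1/a, and α ≠ β with α, β > -1. Then for every n ≥ 1, T maps span{x-c, (x-b)², ..., (x-b)ⁿ} into itself, and the eigenvalue of T on a degree-n polynomial eigenfunction in this space is λ_n = (n-1)(n+α+β). -/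
open Polynomial

private lemma aux_dpow (r : ℝ) (k : ℕ) :
    derivative ((X - C r) ^ (k + 1)) = C ((k : ℝ) + 1) * (X - C r) ^ k := by
  rw [derivative_pow, derivative_X_sub_C, mul_one, Nat.add_sub_cancel]
  push_cast
  ring

private lemma aux_dpow2 (r : ℝ) (k : ℕ) :
    derivative ((X - C r) ^ (k + 2)) = C ((k : ℝ) + 2) * (X - C r) ^ (k + 1) := by
  rw [show k + 2 = (k + 1) + 1 from rfl, aux_dpow]
  push_cast
  ring

private lemma aux_ddpow (r : ℝ) (k : ℕ) :
    derivative (derivative ((X - C r) ^ (k + 2)))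
      = C (((k : ℝ) + 2) * ((k : ℝ) + 1)) * (X - C r) ^ k := by
  rw [aux_dpow2, derivative_C_mul, aux_dpow, ← mul_assoc, ← C_mul]

private lemma aux_Xd (q : Polynomial ℝ) (j : ℕ) :
    (X * derivative q).coeff j = q.coeff j * j := by
  cases j with
  | zero => simp [Polynomial.mul_coeff_zero]
  | succ i =>
      rw [coeff_X_mul, coeff_derivative]
      push_cast
      ring

private lemma auxL1 (r : ℝ) (q : Polynomial ℝ) (k : ℕ) :
    ((C r - X) * q).coeff (k + 1) = r * q.coeff (k + 1) - q.coeff k := by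
  rw [sub_mul, coeff_sub, coeff_C_mul, coeff_X_mul]

private lemma auxL2 (r : ℝ) (q : Polynomial ℝ) (k : ℕ) :
    ((1 - C r * X) * q).coeff (k + 1) = q.coeff (k + 1) - r * q.coeff k := by
  rw [sub_mul, one_mul, coeff_sub, mul_assoc, coeff_C_mul, coeff_X_mul]

/-- the X₁-Jacobi operator
`T(y) = (x²-1)y'' + 2a((1-bx)/(b-x))((x-c)y' - y)` preserves
`span{x-c, (x-b)², ..., (x-b)ⁿ}` for every `n ≥ 1`, and its eigenvalue on a degree-`n`
eigenpolynomial in this space is `λ_n = (n-1)(n+α+β)`. -/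
theorem stmt17 (α β : ℝ) (hαβ : α ≠ β) (hα : -1 < α) (hβ : -1 < β) :
    let a : ℝ := (β - α) / 2
    let b : ℝ := (β + α) / (β - α)
    let c : ℝ := b + 1 / a
    let φ := algebraMap (Polynomial ℝ) (RatFunc ℝ)
    let T : Polynomial ℝ → RatFunc ℝ := fun y =>
      φ ((X ^ 2 - 1) * derivative (derivative y))
        + φ (C (2 * a)) * (φ (1 - C b * X) / φ (C b - X))
          * (φ ((X - C c) * derivative y) - φ y)
    ∀ n : ℕ, 1 ≤ n →
      let E : Submodule ℝ (Polynomial ℝ) :=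
        Submodule.span ℝ ({X - C c} ∪ {q | ∃ j : ℕ, 2 ≤ j ∧ j ≤ n ∧ q = (X - C b) ^ j})
      (∀ y ∈ E, ∃ z ∈ E, T y = φ z) ∧
      (∀ P ∈ E, P.degree = n → ∀ lam : ℝ, T P = φ (C lam * P) →
        lam = ((n : ℝ) - 1) * ((n : ℝ) + α + β)) := by
  intro a b c φ T n hn E
  have hba : β - α ≠ 0 := sub_ne_zero.mpr (Ne.symm hαβ)
  have ha0 : a ≠ 0 := div_ne_zero hba two_ne_zero
  have hab : 2 * a * b = α + β := by
    show 2 * ((β - α) / 2) * ((β + α) / (β - α)) = α + β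
    field_simp
    ring
  have hcc : (C c : Polynomial ℝ) = C b + C (1 / a) := by
    rw [show c = b + 1 / a from rfl, C_add]
  have hCu : (C a : Polynomial ℝ) * C (1 / a) = 1 := by
    rw [← C_mul, mul_one_div_cancel ha0, C_1]
  have hdpoly : (C b - X : Polynomial ℝ) ≠ 0 := by
    intro h
    have := congrArg (fun p => Polynomial.coeff p 1) h
    simp at this
  have hd : φ (C b - X) ≠ 0 := by
    simpa using (map_ne_zero_iff φ (RatFunc.algebraMap_injective ℝ)).mpr hdpoly
  have key : ∀ y z : Polynomial ℝ,
      ((C b - X) * ((X ^ 2 - 1) * derivative (derivative y))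
        + C (2 * a) * ((1 - C b * X) * ((X - C c) * derivative y - y)) = (C b - X) * z)
      ↔ (φ ((X ^ 2 - 1) * derivative (derivative y))
          + φ (C (2 * a)) * (φ (1 - C b * X) / φ (C b - X))
            * (φ ((X - C c) * derivative y) - φ y) = φ z) := by
    intro y z
    have hrw : φ (C (2 * a)) * (φ (1 - C b * X) / φ (C b - X))
          * (φ ((X - C c) * derivative y) - φ y)
        = φ (C (2 * a)) * φ (1 - C b * X) * (φ ((X - C c) * derivative y) - φ y) / φ (C b - X) :=
      by ring
    constructor
    · intro hyz
      rw [hrw, add_comm, ← eq_sub_iff_add_eq, div_eq_iff hd]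
      have h := congrArg φ hyz
      simp only [map_add, map_mul, map_sub, map_one, map_pow] at h ⊢
      linear_combination h
    · intro hT
      rw [hrw, add_comm, ← eq_sub_iff_add_eq, div_eq_iff hd] at hT
      apply RatFunc.algebraMap_injective ℝ
      simp only [map_add, map_mul, map_sub, map_one, map_pow] at hT ⊢
      linear_combination hT
  have hw : ∀ j : ℕ, 2 ≤ j → j ≤ n → (X - C b) ^ j ∈ E :=
    fun j h2 hjn => Submodule.subset_span (Set.mem_union_right _ ⟨j, h2, hjn, rfl⟩)
  have hxc : (X - C c) ∈ E :=
    Submodule.subset_span (Set.mem_union_left _ rfl)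
  constructor
  · -- invariance
    intro y hy
    induction hy using Submodule.span_induction with
    | mem p hp =>
        rcases hp with hp | ⟨j, hj2, hjn, rfl⟩
        · -- p = X - C c
          rw [Set.mem_singleton_iff] at hp
          subst hp
          refine ⟨0, Submodule.zero_mem _, (key _ _).mp ?_⟩
          simp only [derivative_X_sub_C, derivative_one]
          ring
        · -- p = (X - C b) ^ j
          obtain ⟨m, rfl⟩ : ∃ m, j = m + 2 := ⟨j - 2, by omega⟩
          rcases m with _ | m'
          · -- j = 2
            refine ⟨(((0:ℝ) + 1) * (((0:ℝ) + 2) + 2 * a * b)) • (X - C b) ^ (0 + 2)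
                + (2 * a * (b ^ 2 - 1)) • (X - C c), ?_, (key _ _).mp ?_⟩
            · exact Submodule.add_mem _
                (Submodule.smul_mem _ _ (hw (0 + 2) (by omega) hjn))
                (Submodule.smul_mem _ _ hxc)
            · rw [aux_ddpow, aux_dpow2, hcc]
              simp only [smul_eq_C_mul, C_add, C_mul, C_sub, C_1, map_ofNat, C_pow, pow_zero,
                Nat.cast_zero, C_0]
              linear_combination
                (2 * C b + 2 * (C b) ^ 3 - 2 * X - 6 * X * (C b) ^ 2 + 4 * X ^ 2 * (C b)) * hCu
          · -- j = m' + 3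
            refine ⟨(((m' : ℝ) + 2) * (((m' : ℝ) + 3) + 2 * a * b)) • (X - C b) ^ (m' + 1 + 2)
                + (2 * b * ((m' : ℝ) + 1) * ((m' : ℝ) + 3)
                    - 2 * a * (1 - b ^ 2) * ((m' : ℝ) + 2)) • (X - C b) ^ (m' + 1 + 1)
                + ((b ^ 2 - 1) * ((m' : ℝ) + 3) * (m' : ℝ)) • (X - C b) ^ (m' + 1),
                ?_, (key _ _).mp ?_⟩
            · refine Submodule.add_mem _ (Submodule.add_mem _
                (Submodule.smul_mem _ _ (hw (m' + 1 + 2) (by omega) hjn))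
                (Submodule.smul_mem _ _ (hw (m' + 1 + 1) (by omega) (by omega)))) ?_
              rcases m' with _ | k
              · rw [show ((b ^ 2 - 1) * (((0:ℕ) : ℝ) + 3) * ((0:ℕ) : ℝ)) = 0 by norm_num,
                  zero_smul]
                exact Submodule.zero_mem _
              · exact Submodule.smul_mem _ _ (hw (k + 1 + 1) (by omega) (by omega))
            · rw [aux_ddpow, aux_dpow2, hcc]
              simp only [smul_eq_C_mul, C_add, C_mul, C_sub, C_1, map_ofNat, C_pow, map_natCast]
              push_cast
              linear_combination
                ((2 * ((m' : Polynomial ℝ) + 3)) * (C b - X) * (1 - C b * X)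
                  * (X - C b) ^ (m' + 1)) * hCu
    | zero => exact ⟨0, Submodule.zero_mem _, (key 0 0).mp (by simp)⟩
    | add x y hx hy ihx ihy =>
        obtain ⟨z1, hz1, hT1⟩ := ihx
        obtain ⟨z2, hz2, hT2⟩ := ihy
        refine ⟨z1 + z2, Submodule.add_mem _ hz1 hz2, (key _ _).mp ?_⟩
        have i1 := (key x z1).mpr hT1
        have i2 := (key y z2).mpr hT2
        simp only [derivative_add]
        linear_combination i1 + i2
    | smul r x hx ih =>
        obtain ⟨z1, hz1, hT1⟩ := ih
        refine ⟨r • z1, Submodule.smul_mem _ _ hz1, (key _ _).mp ?_⟩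
        have i1 := (key x z1).mpr hT1
        simp only [smul_eq_C_mul, derivative_C_mul]
        linear_combination C r * i1
  · -- eigenvalue
    intro P hP hdeg lam hTP
    obtain ⟨k, rfl⟩ : ∃ k, n = k + 1 := ⟨n - 1, by omega⟩
    have hid := (key P (C lam * P)).mpr hTP
    have np : P.natDegree = k + 1 := natDegree_eq_of_degree_eq_some hdeg
    have hp : P.coeff (k + 1) ≠ 0 := coeff_ne_zero_of_eq_degree hdeg
    have hPc : ∀ j : ℕ, k + 2 ≤ j → P.coeff j = 0 :=
      fun j hj => coeff_eq_zero_of_natDegree_lt (by omega)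
    have hz2 : P.coeff (k + 1 + 1) = 0 := hPc _ (by omega)
    have hz3 : P.coeff (k + 1 + 1 + 1) = 0 := hPc _ (by omega)
    have hz4 : P.coeff (k + 1 + 1 + 1 + 1) = 0 := hPc _ (by omega)
    have main := congrArg (fun q : Polynomial ℝ => q.coeff (k + 1 + 1)) hid
    simp only [show ((X : Polynomial ℝ) ^ 2 - 1) * derivative (derivative P)
        = X * (X * derivative (derivative P)) - derivative (derivative P) from by ring,
      show ((X : Polynomial ℝ) - C c) * derivative P - P
        = X * derivative P - C c * derivative P - P from by ring,
      coeff_add, coeff_sub, auxL1, auxL2, coeff_C_mul, coeff_X_mul, aux_Xd,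
      coeff_derivative, hz2, hz3, hz4] at main
    push_cast at main
    push_cast
    have hq : lam * P.coeff (k + 1)
        = ((k : ℝ) * (((k : ℝ) + 1) + α + β)) * P.coeff (k + 1) := by
      linear_combination main + ((k : ℝ) * P.coeff (k + 1)) * hab
    have hfin := mul_right_cancel₀ hp hq
    linear_combination hfin
end

section
/- Let T(y) = -xy'' + ((x-α)/(x+α))((x+α+1)y' - y) with α > 0. Then for every n ≥ 1, T maps span{x+α+1, (x+α)², ..., (x+α)ⁿ} into itself, and T((x+α)ⁿ) - (n-1)(x+α)ⁿ lies in span{x+α+1, (x+α)², ..., (x+α)^{n-1}} for n ≥ 2; in particular the eigenvalue of T on degree-n eigenpolynomials is λ_n = n-1. -/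
open Polynomial

noncomputable def XLop (α : ℝ) (y : Polynomial ℝ) : RatFunc ℝ :=
  algebraMap (Polynomial ℝ) (RatFunc ℝ) (-X * derivative (derivative y))
    + (algebraMap (Polynomial ℝ) (RatFunc ℝ) (X - C α)
        / algebraMap (Polynomial ℝ) (RatFunc ℝ) (X + C α))
      * (algebraMap (Polynomial ℝ) (RatFunc ℝ) ((X + C (α + 1)) * derivative y)
          - algebraMap (Polynomial ℝ) (RatFunc ℝ) y)

noncomputable def XEsp (α : ℝ) (n : ℕ) : Submodule ℝ (Polynomial ℝ) :=
  Submodule.span ℝ ({X + C (α + 1)} ∪ {q | ∃ j : ℕ, 2 ≤ j ∧ j ≤ n ∧ q = (X + C α) ^ j})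

lemma XL_Cmul (α c : ℝ) (y : Polynomial ℝ) :
    XLop α (C c * y) = algebraMap (Polynomial ℝ) (RatFunc ℝ) (C c) * XLop α y := by
  simp only [XLop, derivative_C_mul, map_mul, map_add, map_neg, map_sub]
  ring

lemma XL_add (α : ℝ) (y z : Polynomial ℝ) : XLop α (y + z) = XLop α y + XLop α z := by
  simp only [XLop, derivative_add, mul_add, map_add, map_mul, map_neg, map_sub]
  ring

lemma XL_zero (α : ℝ) : XLop α 0 = 0 := by
  simp [XLop]

lemma XL_eq (α : ℝ) (y w : Polynomial ℝ)
    (h : (X + C (α + 1)) * derivative y - y = (X + C α) * w) :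
    XLop α y = algebraMap (Polynomial ℝ) (RatFunc ℝ)
      (-X * derivative (derivative y) + (X - C α) * w) := by
  have hu : algebraMap (Polynomial ℝ) (RatFunc ℝ) (X + C α) ≠ 0 := by
    intro h0
    exact X_add_C_ne_zero α (RatFunc.algebraMap_injective ℝ (by simpa using h0))
  rw [XLop, ← map_sub, h,
    show algebraMap (Polynomial ℝ) (RatFunc ℝ) ((X + C α) * w)
        = algebraMap (Polynomial ℝ) (RatFunc ℝ) (X + C α)
            * algebraMap (Polynomial ℝ) (RatFunc ℝ) w from map_mul _ _ _,
    ← mul_assoc, div_mul_cancel₀ _ hu, ← map_mul, ← map_add]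

lemma XL_g1 (α : ℝ) : XLop α (X + C (α + 1)) = 0 := by
  simp [XLop]

lemma divfact (α : ℝ) (k : ℕ) :
    (X + C (α + 1)) * derivative ((X + C α) ^ (k + 2)) - (X + C α) ^ (k + 2)
      = (X + C α) * ((X + C α) ^ k * (C ((k : ℝ) + 1) * (X + C α) + C ((k : ℝ) + 2))) := by
  rw [derivative_pow, show k + 2 - 1 = k + 1 from rfl]
  simp only [derivative_X_add_C, mul_one]
  simp only [map_sub, map_add, map_mul, map_neg, map_one, map_zero, map_ofNat, map_natCast, Nat.cast_zero, Nat.cast_one, Nat.cast_ofNat]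
  push_cast
  ring

lemma XL_pow (α : ℝ) (k : ℕ) :
    XLop α ((X + C α) ^ (k + 2)) = algebraMap (Polynomial ℝ) (RatFunc ℝ)
      (C ((k : ℝ) + 1) * (X + C α) ^ (k + 2)
        + (C (-(k : ℝ) * ((k : ℝ) + 2) - 2 * α * ((k : ℝ) + 1)) * (X + C α) ^ (k + 1)
            + C (α * ((k : ℝ) + 2) * ((k : ℝ) - 1)) * (X + C α) ^ k)) := by
  rw [XL_eq α _ _ (divfact α k)]
  congr 1
  rw [derivative_pow, derivative_X_add_C, mul_one, show k + 2 - 1 = k + 1 from rfl,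
    derivative_C_mul, derivative_pow, derivative_X_add_C, mul_one,
    show k + 1 - 1 = k from rfl]
  simp only [map_sub, map_add, map_mul, map_neg, map_one, map_zero, map_ofNat, map_natCast, Nat.cast_zero, Nat.cast_one, Nat.cast_ofNat]
  push_cast
  ring

lemma mem_g1 (α : ℝ) (n : ℕ) : X + C (α + 1) ∈ XEsp α n :=
  Submodule.subset_span (Or.inl rfl)

lemma mem_pow (α : ℝ) {j n : ℕ} (h2 : 2 ≤ j) (hn : j ≤ n) : (X + C α) ^ j ∈ XEsp α n :=
  Submodule.subset_span (Or.inr ⟨j, h2, hn, rfl⟩)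

lemma XE_mono (α : ℝ) {m n : ℕ} (h : m ≤ n) : XEsp α m ≤ XEsp α n := by
  apply Submodule.span_mono
  rintro q (hq | ⟨j, h2, hj, rfl⟩)
  · exact Or.inl hq
  · exact Or.inr ⟨j, h2, hj.trans h, rfl⟩

lemma diff_mem (α : ℝ) (k : ℕ) :
    C (-(k : ℝ) * ((k : ℝ) + 2) - 2 * α * ((k : ℝ) + 1)) * (X + C α) ^ (k + 1)
      + C (α * ((k : ℝ) + 2) * ((k : ℝ) - 1)) * (X + C α) ^ k ∈ XEsp α (k + 1) := by
  match k with
  | 0 =>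
    have h : C (-((0:ℕ) : ℝ) * (((0:ℕ) : ℝ) + 2) - 2 * α * (((0:ℕ) : ℝ) + 1)) * (X + C α) ^ (0 + 1)
        + C (α * (((0:ℕ) : ℝ) + 2) * (((0:ℕ) : ℝ) - 1)) * (X + C α) ^ 0
        = (-(2 * α)) • (X + C (α + 1)) := by
      simp only [smul_eq_C_mul]
      simp only [map_sub, map_add, map_mul, map_neg, map_one, map_zero, map_ofNat, map_natCast, Nat.cast_zero, Nat.cast_one, Nat.cast_ofNat]
      push_cast
      ring
    rw [h]
    exact Submodule.smul_mem _ _ (mem_g1 α 1)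
  | 1 =>
    have h : C (-((1:ℕ) : ℝ) * (((1:ℕ) : ℝ) + 2) - 2 * α * (((1:ℕ) : ℝ) + 1)) * (X + C α) ^ (1 + 1)
        + C (α * (((1:ℕ) : ℝ) + 2) * (((1:ℕ) : ℝ) - 1)) * (X + C α) ^ 1
        = (-(3 + 4 * α)) • ((X + C α) ^ 2) := by
      simp only [smul_eq_C_mul]
      simp only [map_sub, map_add, map_mul, map_neg, map_one, map_zero, map_ofNat, map_natCast, Nat.cast_zero, Nat.cast_one, Nat.cast_ofNat]
      push_cast
      ring
    rw [h]
    exact Submodule.smul_mem _ _ (mem_pow α le_rfl le_rfl)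
  | (m + 2) =>
    rw [← smul_eq_C_mul, ← smul_eq_C_mul]
    exact add_mem (Submodule.smul_mem _ _ (mem_pow α (by omega) (by omega)))
      (Submodule.smul_mem _ _ (mem_pow α (by omega) (by omega)))

lemma part1 (α : ℝ) (n : ℕ) :
    ∀ y ∈ XEsp α n, ∃ z ∈ XEsp α n, XLop α y = algebraMap (Polynomial ℝ) (RatFunc ℝ) z := by
  intro y hy
  induction hy using Submodule.span_induction with
  | mem x hx =>
    rcases hx with hx | ⟨j, h2, hjn, rfl⟩
    · rcases hx with rfl
      exact ⟨0, Submodule.zero_mem _, by rw [XL_g1, map_zero]⟩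
    · obtain ⟨k, rfl⟩ : ∃ k, j = k + 2 := ⟨j - 2, by omega⟩
      refine ⟨_, ?_, XL_pow α k⟩
      refine add_mem ?_ (XE_mono α (by omega : k + 1 ≤ n) (diff_mem α k))
      rw [← smul_eq_C_mul]
      exact Submodule.smul_mem _ _ (mem_pow α h2 hjn)
  | zero => exact ⟨0, Submodule.zero_mem _, by rw [XL_zero, map_zero]⟩
  | add x y hx hy ihx ihy =>
    obtain ⟨zx, hzx, ex⟩ := ihx
    obtain ⟨zy, hzy, ey⟩ := ihy
    exact ⟨zx + zy, add_mem hzx hzy, by rw [XL_add, ex, ey, map_add]⟩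
  | smul a x hx ih =>
    obtain ⟨z, hz, e⟩ := ih
    refine ⟨a • z, Submodule.smul_mem _ _ hz, ?_⟩
    rw [smul_eq_C_mul, XL_Cmul, e, ← map_mul, ← smul_eq_C_mul]

lemma eigen_claim (α : ℝ) (n : ℕ) (hn : 2 ≤ n) :
    ∀ y ∈ XEsp α n, ∃ w ∈ XEsp α (n - 1),
      XLop α y - algebraMap (Polynomial ℝ) (RatFunc ℝ) (C ((n : ℝ) - 1) * y)
        = algebraMap (Polynomial ℝ) (RatFunc ℝ) w := by
  intro y hy
  induction hy using Submodule.span_induction with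
  | mem x hx =>
    rcases hx with hx | ⟨j, h2, hjn, rfl⟩
    · rcases hx with rfl
      refine ⟨(-((n : ℝ) - 1)) • (X + C (α + 1)),
        Submodule.smul_mem _ _ (mem_g1 α (n - 1)), ?_⟩
      rw [XL_g1, zero_sub, ← map_neg, smul_eq_C_mul]
      congr 1
      rw [C_neg]
      ring
    · obtain ⟨k, rfl⟩ : ∃ k, j = k + 2 := ⟨j - 2, by omega⟩
      refine ⟨(C (-(k : ℝ) * ((k : ℝ) + 2) - 2 * α * ((k : ℝ) + 1)) * (X + C α) ^ (k + 1)
          + C (α * ((k : ℝ) + 2) * ((k : ℝ) - 1)) * (X + C α) ^ k)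
          + C (((k : ℝ) + 2) - (n : ℝ)) * (X + C α) ^ (k + 2), ?_, ?_⟩
      · refine add_mem (XE_mono α (by omega : k + 1 ≤ n - 1) (diff_mem α k)) ?_
        rcases eq_or_lt_of_le hjn with heq | hlt
        · have hc : ((k : ℝ) + 2) - (n : ℝ) = 0 := by
            rw [← heq]; push_cast; ring
          rw [hc, C_0, zero_mul]
          exact Submodule.zero_mem _
        · rw [← smul_eq_C_mul]
          exact Submodule.smul_mem _ _ (mem_pow α h2 (by omega))
      · rw [XL_pow, ← map_sub]
        congr 1
        simp only [map_sub, map_add, map_mul, map_neg, map_one, map_zero, map_ofNat, map_natCast, Nat.cast_zero, Nat.cast_one, Nat.cast_ofNat]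
        push_cast
        ring
  | zero =>
    exact ⟨0, Submodule.zero_mem _, by simp [XL_zero]⟩
  | add x y hx hy ihx ihy =>
    obtain ⟨wx, hwx, ex⟩ := ihx
    obtain ⟨wy, hwy, ey⟩ := ihy
    refine ⟨wx + wy, add_mem hwx hwy, ?_⟩
    rw [XL_add, mul_add, map_add, map_add]
    linear_combination ex + ey
  | smul a x hx ih =>
    obtain ⟨w, hw, e⟩ := ih
    refine ⟨a • w, Submodule.smul_mem _ _ hw, ?_⟩
    rw [smul_eq_C_mul, smul_eq_C_mul, XL_Cmul]
    rw [map_mul] at e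
    simp only [map_mul]
    linear_combination (algebraMap (Polynomial ℝ) (RatFunc ℝ) (C a)) * e

lemma XE_deg (α : ℝ) (m : ℕ) (hm : 1 ≤ m) : XEsp α m ≤ Polynomial.degreeLE ℝ (m : ℕ) := by
  rw [XEsp, Submodule.span_le]
  rintro q (hq | ⟨j, h2, hj, rfl⟩)
  · rcases hq with rfl
    rw [SetLike.mem_coe, Polynomial.mem_degreeLE, degree_X_add_C]
    exact_mod_cast hm
  · rw [SetLike.mem_coe, Polynomial.mem_degreeLE]
    have : degree ((X + C α) ^ j) = (j : WithBot ℕ) := by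
      rw [degree_pow, degree_X_add_C]
      simp
    rw [this]
    exact_mod_cast hj

/-- the X₁-Laguerre operator `T(y) = -xy'' + ((x-α)/(x+α))((x+α+1)y' - y)`
with `α > 0` preserves `span{x+α+1, (x+α)², ..., (x+α)ⁿ}` for every `n ≥ 1`;
`T((x+α)ⁿ) - (n-1)(x+α)ⁿ` lies in `span{x+α+1, (x+α)², ..., (x+α)^{n-1}}` for `n ≥ 2`;
and the eigenvalue of `T` on a degree-`n` eigenpolynomial in this space is `λ_n = n-1`. -/
theorem stmt18 (α : ℝ) (hα : 0 < α) :
    let φ := algebraMap (Polynomial ℝ) (RatFunc ℝ)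
    let T : Polynomial ℝ → RatFunc ℝ := fun y =>
      φ (-X * derivative (derivative y))
        + (φ (X - C α) / φ (X + C α))
          * (φ ((X + C (α + 1)) * derivative y) - φ y)
    let E : ℕ → Submodule ℝ (Polynomial ℝ) := fun n =>
      Submodule.span ℝ ({X + C (α + 1)} ∪ {q | ∃ j : ℕ, 2 ≤ j ∧ j ≤ n ∧ q = (X + C α) ^ j})
    (∀ n : ℕ, 1 ≤ n → ∀ y ∈ E n, ∃ z ∈ E n, T y = φ z) ∧
    (∀ n : ℕ, 2 ≤ n → ∃ z ∈ E (n - 1),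
      T ((X + C α) ^ n) - φ (C ((n : ℝ) - 1) * (X + C α) ^ n) = φ z) ∧
    (∀ n : ℕ, 1 ≤ n → ∀ P ∈ E n, P.degree = n → ∀ lam : ℝ, T P = φ (C lam * P) →
      lam = (n : ℝ) - 1) := by
  intro φ T E
  have hTE : ∀ y, T y = XLop α y := fun _ => rfl
  have hEE : ∀ n, E n = XEsp α n := fun _ => rfl
  refine ⟨?_, ?_, ?_⟩
  · intro n _ y hy
    rw [hEE] at hy ⊢
    rw [hTE]
    exact part1 α n y hy
  · intro n hn
    have h2 : (X + C α) ^ n ∈ XEsp α n := mem_pow α hn le_rfl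
    obtain ⟨w, hw, e⟩ := eigen_claim α n hn _ h2
    exact ⟨w, by rw [hEE]; exact hw, by rw [hTE]; exact e⟩
  · intro n hn P hP hdeg lam heig
    rw [hEE] at hP
    rw [hTE] at heig
    rcases eq_or_lt_of_le hn with h1 | h2
    · -- n = 1
      subst h1
      have hset : {q : Polynomial ℝ | ∃ j : ℕ, 2 ≤ j ∧ j ≤ 1 ∧ q = (X + C α) ^ j} = ∅ := by
        ext q; simp only [Set.mem_setOf_eq, Set.mem_empty_iff_false, iff_false]
        rintro ⟨j, h2, hj, _⟩; omega
      rw [XEsp, hset, Set.union_empty, Submodule.mem_span_singleton] at hP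
      obtain ⟨c, rfl⟩ := hP
      have hT0 : XLop α (c • (X + C (α + 1))) = 0 := by
        rw [smul_eq_C_mul, XL_Cmul, XL_g1, mul_zero]
      rw [hT0] at heig
      have h0 : C lam * (c • (X + C (α + 1))) = 0 :=
        RatFunc.algebraMap_injective ℝ (by rw [map_zero, ← heig])
      have hne : c • (X + C (α + 1)) ≠ (0 : Polynomial ℝ) := by
        intro hc
        rw [hc, degree_zero] at hdeg
        exact absurd hdeg (by simp)
      have : C lam = 0 := by
        rcases mul_eq_zero.mp h0 with h | h
        · exact h
        · exact absurd h hne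
      have : lam = 0 := by simpa using this
      rw [this]; norm_num
    · -- n ≥ 2
      obtain ⟨w, hw, e⟩ := eigen_claim α n h2 P hP
      rw [heig, ← map_sub] at e
      have hwP : C lam * P - C ((n : ℝ) - 1) * P = w := RatFunc.algebraMap_injective ℝ e
      by_contra hne
      have hc : lam - ((n : ℝ) - 1) ≠ 0 := sub_ne_zero.mpr hne
      have hwdeg : w.degree ≤ ((n - 1 : ℕ) : WithBot ℕ) :=
        Polynomial.mem_degreeLE.mp (XE_deg α (n - 1) (by omega) hw)
      have hwP' : C (lam - ((n : ℝ) - 1)) * P = w := by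
        rw [C_sub, sub_mul]; exact hwP
      have hdw : w.degree = (n : WithBot ℕ) := by
        rw [← hwP', degree_C_mul hc, hdeg]
      rw [hdw] at hwdeg
      have : (n : ℕ) ≤ n - 1 := by exact_mod_cast hwdeg
      omega
end

section
/- Suppose T is a second-order differential operator preserving P_n, P_{n+1}, and P_{n+2} for some n ≥ 2. Then T(y) = p(x)y'' + q(x)y' + ry with deg p ≤ 2, deg q ≤ 1, and r constant. -/
open Polynomial

noncomputable abbrev aM : Polynomial ℝ →+* RatFunc ℝ := algebraMap (Polynomial ℝ) (RatFunc ℝ)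

lemma helper_deg (a : Polynomial ℝ) (j c : ℕ) (h : (a * X ^ j).natDegree ≤ c + j) :
    a.natDegree ≤ c := by
  by_cases ha : a = 0
  · simp [ha]
  · rw [natDegree_mul ha (pow_ne_zero _ X_ne_zero), natDegree_X_pow] at h; omega

lemma cast_mul_deg (c : ℕ) (a : Polynomial ℝ) (j : ℕ) :
    ((c : Polynomial ℝ) * a * X ^ j).natDegree ≤ a.natDegree + j := by
  refine natDegree_mul_le.trans ?_
  have h1 : ((c : Polynomial ℝ) * a).natDegree ≤ a.natDegree :=
    natDegree_mul_le.trans (by simp [natDegree_natCast])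
  have := natDegree_X_pow (R := ℝ) j
  omega

lemma aux_deg (k : ℕ) (p q r : Polynomial ℝ)
    (h0 : ((((k+2)*(k+1) : ℕ) : Polynomial ℝ) * p * X ^ k
        + (((k+2 : ℕ)) : Polynomial ℝ) * q * X ^ (k+1) + r * X ^ (k+2)).natDegree ≤ k + 2)
    (h1 : ((((k+3)*(k+2) : ℕ) : Polynomial ℝ) * p * X ^ (k+1)
        + (((k+3 : ℕ)) : Polynomial ℝ) * q * X ^ (k+2) + r * X ^ (k+3)).natDegree ≤ k + 3)
    (h2 : ((((k+4)*(k+3) : ℕ) : Polynomial ℝ) * p * X ^ (k+2)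
        + (((k+4 : ℕ)) : Polynomial ℝ) * q * X ^ (k+3) + r * X ^ (k+4)).natDegree ≤ k + 4) :
    p.natDegree ≤ 2 ∧ q.natDegree ≤ 1 ∧ r.natDegree ≤ 0 := by
  set S0 := (((k+2)*(k+1) : ℕ) : Polynomial ℝ) * p * X ^ k
        + (((k+2 : ℕ)) : Polynomial ℝ) * q * X ^ (k+1) + r * X ^ (k+2) with hS0
  set S1 := (((k+3)*(k+2) : ℕ) : Polynomial ℝ) * p * X ^ (k+1)
        + (((k+3 : ℕ)) : Polynomial ℝ) * q * X ^ (k+2) + r * X ^ (k+3) with hS1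
  set S2 := (((k+4)*(k+3) : ℕ) : Polynomial ℝ) * p * X ^ (k+2)
        + (((k+4 : ℕ)) : Polynomial ℝ) * q * X ^ (k+3) + r * X ^ (k+4) with hS2
  have e1 : S1 - X * S0 = ((2*(k+2) : ℕ) : Polynomial ℝ) * p * X ^ (k+1) + q * X ^ (k+2) := by
    rw [hS0, hS1]; push_cast; ring
  have e2 : S2 - X * S1 = ((2*(k+3) : ℕ) : Polynomial ℝ) * p * X ^ (k+2) + q * X ^ (k+3) := by
    rw [hS1, hS2]; push_cast; ring
  have b1 : (((2*(k+2) : ℕ) : Polynomial ℝ) * p * X ^ (k+1) + q * X ^ (k+2)).natDegree ≤ k + 3 := by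
    rw [← e1]
    refine (natDegree_sub_le _ _).trans (max_le h1 (natDegree_mul_le.trans ?_))
    have := natDegree_X_le (R := ℝ)
    omega
  have b2 : (((2*(k+3) : ℕ) : Polynomial ℝ) * p * X ^ (k+2) + q * X ^ (k+3)).natDegree ≤ k + 4 := by
    rw [← e2]
    refine (natDegree_sub_le _ _).trans (max_le h2 (natDegree_mul_le.trans ?_))
    have := natDegree_X_le (R := ℝ)
    omega
  have e3 : (((2*(k+3) : ℕ) : Polynomial ℝ) * p * X ^ (k+2) + q * X ^ (k+3))
      - X * (((2*(k+2) : ℕ) : Polynomial ℝ) * p * X ^ (k+1) + q * X ^ (k+2))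
      = C (2:ℝ) * (p * X ^ (k+2)) := by
    rw [show (C (2:ℝ)) = ((2:ℕ) : Polynomial ℝ) by push_cast [C_eq_natCast]; rfl]
    push_cast; ring
  have b3 : (p * X ^ (k+2)).natDegree ≤ k + 4 := by
    rw [← natDegree_C_mul (two_ne_zero), ← e3]
    refine (natDegree_sub_le _ _).trans (max_le b2 (natDegree_mul_le.trans ?_))
    have := natDegree_X_le (R := ℝ)
    omega
  have hp : p.natDegree ≤ 2 := helper_deg p (k+2) 2 (by omega)
  have e4 : (((2*(k+2) : ℕ) : Polynomial ℝ) * p * X ^ (k+1) + q * X ^ (k+2))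
      - ((2*(k+2) : ℕ) : Polynomial ℝ) * p * X ^ (k+1) = q * X ^ (k+2) := by ring
  have b4 : (q * X ^ (k+2)).natDegree ≤ k + 3 := by
    rw [← e4]
    refine (natDegree_sub_le _ _).trans (max_le b1 ((cast_mul_deg _ _ _).trans (by omega)))
  have hq : q.natDegree ≤ 1 := helper_deg q (k+2) 1 (by omega)
  have e5 : S0 - (((k+2)*(k+1) : ℕ) : Polynomial ℝ) * p * X ^ k
      - (((k+2 : ℕ)) : Polynomial ℝ) * q * X ^ (k+1) = r * X ^ (k+2) := by rw [hS0]; ring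
  have b5 : (r * X ^ (k+2)).natDegree ≤ k + 2 := by
    rw [← e5]
    refine (natDegree_sub_le _ _).trans (max_le ((natDegree_sub_le _ _).trans
      (max_le h0 ((cast_mul_deg _ _ _).trans (by omega)))) ((cast_mul_deg _ _ _).trans (by omega)))
  exact ⟨hp, hq, helper_deg r (k+2) 0 (by omega)⟩

lemma extract_eq (j : ℕ) (p' q' r' z : Polynomial ℝ)
    (h : aM p' * aM (derivative (derivative ((X : Polynomial ℝ) ^ (j+2))))
       + aM q' * aM (derivative ((X : Polynomial ℝ) ^ (j+2))) + aM r' * aM ((X : Polynomial ℝ) ^ (j+2)) = aM z)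
    (hzd : z.natDegree ≤ j + 2) :
    ((((j+2)*(j+1) : ℕ) : Polynomial ℝ) * p' * X ^ j
        + (((j+2 : ℕ)) : Polynomial ℝ) * q' * X ^ (j+1) + r' * X ^ (j+2)).natDegree ≤ j + 2 := by
  have hinj : Function.Injective aM := IsFractionRing.injective _ _
  have E : p' * derivative (derivative ((X : Polynomial ℝ) ^ (j+2)))
      + q' * derivative ((X : Polynomial ℝ) ^ (j+2)) + r' * X ^ (j+2) = z := by
    apply hinj
    rw [map_add, map_add, map_mul, map_mul, map_mul]
    exact h
  have E2 : (((j+2)*(j+1) : ℕ) : Polynomial ℝ) * p' * X ^ j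
      + (((j+2 : ℕ)) : Polynomial ℝ) * q' * X ^ (j+1) + r' * X ^ (j+2) = z := by
    rw [← E]
    rw [derivative_X_pow, derivative_C_mul, derivative_X_pow]
    simp only [Nat.add_sub_cancel, C_eq_natCast]
    push_cast
    ring
  rw [E2]; exact hzd

/-- if a single second-order operator `T(y) = p y'' + q y' + r y` with rational
coefficients maps each of `P_n`, `P_{n+1}`, `P_{n+2}` into itself (`n ≥ 2`), then `p, q, r`
are polynomials with `deg p ≤ 2`, `deg q ≤ 1`, `deg r ≤ 0`. -/
theorem stmt19 (n : ℕ) (hn : 2 ≤ n) (p q r : RatFunc ℝ)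
    (hpres : ∀ m : ℕ, m = n ∨ m = n + 1 ∨ m = n + 2 →
      ∀ y : Polynomial ℝ, y.degree ≤ (m : WithBot ℕ) →
        ∃ z : Polynomial ℝ, z.degree ≤ (m : WithBot ℕ) ∧
          p * algebraMap (Polynomial ℝ) (RatFunc ℝ) (derivative (derivative y))
            + q * algebraMap (Polynomial ℝ) (RatFunc ℝ) (derivative y)
            + r * algebraMap (Polynomial ℝ) (RatFunc ℝ) y
          = algebraMap (Polynomial ℝ) (RatFunc ℝ) z) :
    ∃ p' q' r' : Polynomial ℝ, p'.degree ≤ 2 ∧ q'.degree ≤ 1 ∧ r'.degree ≤ 0 ∧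
      p = algebraMap (Polynomial ℝ) (RatFunc ℝ) p' ∧
      q = algebraMap (Polynomial ℝ) (RatFunc ℝ) q' ∧
      r = algebraMap (Polynomial ℝ) (RatFunc ℝ) r' := by
  obtain ⟨k, rfl⟩ : ∃ k, n = k + 2 := ⟨n - 2, by omega⟩
  have hinj : Function.Injective aM := IsFractionRing.injective _ _
  -- r
  obtain ⟨z0, hz0d, hz0⟩ := hpres (k+2) (Or.inl rfl) 1
    (degree_one_le.trans (by exact_mod_cast Nat.zero_le (k+2)))
  simp only [derivative_one, derivative_zero, map_zero, mul_zero, zero_add, map_one,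
    mul_one] at hz0
  have hr : r = aM z0 := hz0
  -- q
  obtain ⟨z1, hz1d, hz1⟩ := hpres (k+2) (Or.inl rfl) X
    (degree_X_le.trans (by exact_mod_cast Nat.one_le_iff_ne_zero.mpr (by omega)))
  simp only [derivative_X, derivative_one, map_zero, mul_zero, zero_add, map_one,
    mul_one] at hz1
  have hq : q = aM (z1 - z0 * X) := by
    rw [map_sub, map_mul, ← hr]
    linear_combination hz1
  -- p
  obtain ⟨z2, hz2d, hz2⟩ := hpres (k+2) (Or.inl rfl) (X^2)
    ((degree_X_pow 2).le.trans (by exact_mod_cast by omega))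
  rw [show derivative ((X : Polynomial ℝ)^2) = C 2 * X by
      rw [derivative_X_pow]; norm_num,
    show derivative (C (2:ℝ) * X) = C 2 by simp] at hz2
  have h2ne : aM (C (2:ℝ)) ≠ 0 := by
    rw [map_ne_zero_iff _ hinj]
    exact fun h => two_ne_zero (C_eq_zero.mp h)
  set w : Polynomial ℝ := z2 - (z1 - z0 * X) * (C 2 * X) - z0 * X ^ 2 with hw
  have hp : p = aM (C (1/2 : ℝ) * w) := by
    apply mul_left_cancel₀ h2ne
    have key : C (2:ℝ) * (C (1/2 : ℝ) * w) = w := by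
      rw [← mul_assoc, ← C_mul]; norm_num
    rw [← map_mul, key, hw, map_sub, map_sub, map_mul aM (z1 - z0 * X) (C 2 * X),
      map_mul aM z0 (X ^ 2), ← hq, ← hr]
    linear_combination hz2
  -- degree bounds
  have key : ∀ j : ℕ, j = k ∨ j = k + 1 ∨ j = k + 2 →
      ((((j+2)*(j+1) : ℕ) : Polynomial ℝ) * (C (1/2:ℝ) * w) * X ^ j
        + (((j+2 : ℕ)) : Polynomial ℝ) * (z1 - z0 * X) * X ^ (j+1)
        + z0 * X ^ (j+2)).natDegree ≤ j + 2 := by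
    intro j hj
    have hj' : j + 2 = k + 2 ∨ j + 2 = (k+2) + 1 ∨ j + 2 = (k+2) + 2 := by omega
    obtain ⟨z, hzd, hz⟩ := hpres (j+2) hj' (X ^ (j+2)) (degree_X_pow (j+2)).le
    rw [hp, hq, hr] at hz
    exact extract_eq j _ _ _ z hz (natDegree_le_iff_degree_le.mpr hzd)
  obtain ⟨hdp, hdq, hdr⟩ := aux_deg k (C (1/2:ℝ) * w) (z1 - z0 * X) z0
    (key k (Or.inl rfl)) (key (k+1) (Or.inr (Or.inl rfl))) (key (k+2) (Or.inr (Or.inr rfl)))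
  refine ⟨C (1/2:ℝ) * w, z1 - z0 * X, z0, ?_, ?_, ?_, hp, hq, hr⟩
  · exact_mod_cast natDegree_le_iff_degree_le.mp hdp
  · exact_mod_cast natDegree_le_iff_degree_le.mp hdq
  · exact_mod_cast natDegree_le_iff_degree_le.mp hdr
end
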